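/- arXiv:2208.02147 — 7 statements merged into one kernel-verified Lean document; each statement's English description precedes it below -/
import Mathlib

section
/- For every z in the open unit disk, ω(z) = (1/2) log((1+|z|)/(1-|z|)), where ω(z) = sup { |f(z)| : f Bloch on 𝔻, f(0)=0, |f(0)| + β_f ≤ 1 }; i.e., the supremum is attained in value by the function f(w) = (1/2) Log((1+w z̄/|z|)/(1 - w z̄/|z|)) for z ≠ 0 (suitably interpreted) and equals the Poincaré distance ρ(z,0). -/
open Complex Filter

noncomputable section

/-- The open unit disk in ℂ. -/
def unitDisk : Set ℂ := Metric.ball 0 1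

/-- The Bloch seminorm β_f = sup_{z∈𝔻} (1-|z|²)|f'(z)|. -/
def betaSem (f : ℂ → ℂ) : ℝ :=
  sSup ((fun z => (1 - ‖z‖ ^ 2) * ‖deriv f z‖) '' unitDisk)

/-- A holomorphic function on 𝔻 with finite Bloch seminorm. -/
def IsBlochFn (f : ℂ → ℂ) : Prop :=
  DifferentiableOn ℂ f unitDisk ∧
    BddAbove ((fun z => (1 - ‖z‖ ^ 2) * ‖deriv f z‖) '' unitDisk)

/-- The Bloch norm ‖f‖_ℬ = |f(0)| + β_f. -/
def blochNorm (f : ℂ → ℂ) : ℝ := ‖f 0‖ + betaSem f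

/-- ω(z) = sup { |f(z)| : f Bloch on 𝔻, f(0)=0, ‖f‖_ℬ ≤ 1 }. -/
def omegaD (z : ℂ) : ℝ :=
  sSup {r : ℝ | ∃ f : ℂ → ℂ, IsBlochFn f ∧ f 0 = 0 ∧ blochNorm f ≤ 1 ∧ r = ‖f z‖}

/-- The set of values μ(z)|ψ(z)||f(φ(z))| over f in the unit ball of ℬ(𝔻) and z ∈ 𝔻;
its supremum is the operator norm of W_{ψ,φ} : ℬ(𝔻) → H^∞_μ(𝔻). -/
def WSet (μ : ℂ → ℝ) (ψ φ : ℂ → ℂ) : Set ℝ :=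
  {r : ℝ | ∃ f : ℂ → ℂ, IsBlochFn f ∧ blochNorm f ≤ 1 ∧
    ∃ z ∈ unitDisk, r = μ z * (‖ψ z‖ * ‖f (φ z)‖)}

/-- Boundedness of W_{ψ,φ} : ℬ(𝔻) → H^∞_μ(𝔻). -/
def WBounded (μ : ℂ → ℝ) (ψ φ : ℂ → ℂ) : Prop := BddAbove (WSet μ ψ φ)

/-- The operator norm of W_{ψ,φ} : ℬ(𝔻) → H^∞_μ(𝔻). -/
def WNorm (μ : ℂ → ℝ) (ψ φ : ℂ → ℂ) : ℝ := sSup (WSet μ ψ φ)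

/-- Compactness of W_{ψ,φ} : ℬ(𝔻) → H^∞_μ(𝔻): every sequence in the image of the
unit ball of ℬ(𝔻) has a subsequence converging in the norm of H^∞_μ(𝔻). -/
def WCompact (μ : ℂ → ℝ) (ψ φ : ℂ → ℂ) : Prop :=
  ∀ g : ℕ → ℂ → ℂ, (∀ k, IsBlochFn (g k) ∧ blochNorm (g k) ≤ 1) →
    ∃ σ : ℕ → ℕ, StrictMono σ ∧ ∃ h : ℂ → ℂ,
      ∀ ε > 0, ∃ N : ℕ, ∀ j ≥ N, ∀ z ∈ unitDisk,
        μ z * ‖ψ z * g (σ j) (φ z) - h z‖ ≤ ε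

lemma key_integral (r : ℝ) (h0 : 0 ≤ r) (h1 : r < 1) :
    ∫ t in (0:ℝ)..1, r / (1 - t^2 * r^2) = (1/2) * Real.log ((1+r)/(1-r)) := by
  have hpos : ∀ t ∈ Set.Icc (0:ℝ) 1, 0 < 1 - t * r ∧ 0 < 1 + t * r := by
    intro t ht
    have h2 : t * r ≤ r := by
      nlinarith [ht.1, ht.2]
    have h3 : 0 ≤ t * r := mul_nonneg ht.1 h0
    constructor <;> nlinarith
  have hderiv : ∀ t ∈ Set.uIcc (0:ℝ) 1,
      HasDerivAt (fun t => (1/2) * (Real.log (1 + t*r) - Real.log (1 - t*r)))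
        (r / (1 - t^2 * r^2)) t := by
    intro t ht
    rw [Set.uIcc_of_le zero_le_one] at ht
    obtain ⟨hm, hp⟩ := hpos t ht
    have d1 : HasDerivAt (fun t : ℝ => 1 + t*r) r t := by
      simpa using (hasDerivAt_mul_const r).const_add 1
    have d2 : HasDerivAt (fun t : ℝ => 1 - t*r) (-r) t := by
      simpa using (hasDerivAt_mul_const r).const_sub 1
    have l1 := d1.log hp.ne'
    have l2 := d2.log hm.ne'
    have := ((l1.sub l2).const_mul (1/2 : ℝ))
    refine this.congr_deriv ?_
    have h4 : 1 - t^2 * r^2 = (1 - t*r) * (1 + t*r) := by ring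
    rw [h4]
    rw [neg_div, sub_neg_eq_add, div_add_div _ _ hp.ne' hm.ne', mul_div_assoc', div_eq_div_iff (mul_ne_zero hp.ne' hm.ne') (mul_ne_zero hm.ne' hp.ne')]
    ring
  have hcont : ContinuousOn (fun t : ℝ => r / (1 - t^2 * r^2)) (Set.uIcc (0:ℝ) 1) := by
    rw [Set.uIcc_of_le zero_le_one]
    apply ContinuousOn.div continuousOn_const (by fun_prop)
    intro t ht
    obtain ⟨hm, hp⟩ := hpos t ht
    have : 1 - t^2*r^2 = (1 - t*r)*(1+t*r) := by ring
    rw [this]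
    positivity
  rw [intervalIntegral.integral_eq_sub_of_hasDerivAt hderiv hcont.intervalIntegrable]
  rw [Real.log_div (by linarith) (by linarith)]
  simp

lemma upper_bound (f : ℂ → ℂ) (hf : IsBlochFn f) (h0 : f 0 = 0) (hb : blochNorm f ≤ 1)
    (z : ℂ) (hz : z ∈ unitDisk) :
    ‖f z‖ ≤ (1/2) * Real.log ((1 + ‖z‖) / (1 - ‖z‖)) := by
  have hzn : ‖z‖ < 1 := by simpa [unitDisk] using hz
  have hzn0 : (0:ℝ) ≤ ‖z‖ := norm_nonneg z
  -- pointwise derivative bound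
  have hbeta : betaSem f ≤ 1 := by
    have : ‖f 0‖ = 0 := by simp [h0]
    unfold blochNorm at hb; linarith [hb, this ▸ hb]
  have hder : ∀ w ∈ unitDisk, ‖deriv f w‖ ≤ 1 / (1 - ‖w‖^2) := by
    intro w hw
    have hwn : ‖w‖ < 1 := by simpa [unitDisk] using hw
    have hpos : 0 < 1 - ‖w‖^2 := by nlinarith [norm_nonneg w]
    have hle : (1 - ‖w‖^2) * ‖deriv f w‖ ≤ betaSem f :=
      le_csSup hf.2 ⟨w, hw, rfl⟩
    rw [le_div_iff₀ hpos, mul_comm]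
    linarith
  -- the path t ↦ f (t z)
  set g' : ℝ → ℂ := fun t => deriv f ((t:ℂ)*z) * z with hg'
  have hmem : ∀ t ∈ Set.Icc (0:ℝ) 1, (t:ℂ)*z ∈ unitDisk := by
    intro t ht
    simp only [unitDisk, Metric.mem_ball, dist_zero_right, norm_mul, Complex.norm_real,
      Real.norm_eq_abs, _root_.abs_of_nonneg ht.1]
    calc t * ‖z‖ ≤ 1 * ‖z‖ := by nlinarith [ht.2, hzn0]
    _ < 1 := by simpa using hzn
  have hdg : ∀ t ∈ Set.uIcc (0:ℝ) 1, HasDerivAt (fun t : ℝ => f ((t:ℂ)*z)) (g' t) t := by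
    intro t ht
    rw [Set.uIcc_of_le zero_le_one] at ht
    have hm := hmem t ht
    have h1 : HasDerivAt f (deriv f ((t:ℂ)*z)) ((t:ℂ)*z) :=
      (hf.1.differentiableAt (Metric.isOpen_ball.mem_nhds hm)).hasDerivAt
    have h2 : HasDerivAt (fun w : ℂ => w * z) z (t:ℂ) := hasDerivAt_mul_const z
    exact (h1.comp (t:ℂ) h2).comp_ofReal
  have hdc : ContinuousOn (deriv f) unitDisk :=
    ((hf.1.analyticOnNhd Metric.isOpen_ball).deriv).continuousOn
  have hg'cont : ContinuousOn g' (Set.uIcc (0:ℝ) 1) := by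
    rw [Set.uIcc_of_le zero_le_one]
    apply ContinuousOn.mul _ continuousOn_const
    exact hdc.comp (by fun_prop) hmem
  have hint : IntervalIntegrable g' MeasureTheory.volume 0 1 :=
    hg'cont.intervalIntegrable
  have heq : ∫ t in (0:ℝ)..1, g' t = f z - f 0 := by
    have := intervalIntegral.integral_eq_sub_of_hasDerivAt hdg hint
    simpa using this
  have hnb : ∀ t ∈ Set.Ioc (0:ℝ) 1, ‖g' t‖ ≤ ‖z‖ / (1 - t^2 * ‖z‖^2) := by
    intro t ht
    have ht' : t ∈ Set.Icc (0:ℝ) 1 := ⟨le_of_lt ht.1, ht.2⟩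
    have hm := hmem t ht'
    have hn : ‖(t:ℂ)*z‖ = t * ‖z‖ := by
      simp [norm_mul, Complex.norm_real, Real.norm_eq_abs, _root_.abs_of_nonneg ht'.1]
    have hd := hder _ hm
    rw [hn] at hd
    have hpos : 0 < 1 - (t*‖z‖)^2 := by
      have : t * ‖z‖ < 1 := by nlinarith [ht'.2, hzn0, hzn, ht'.1]
      nlinarith [mul_nonneg ht'.1 hzn0]
    calc ‖g' t‖ = ‖deriv f ((t:ℂ)*z)‖ * ‖z‖ := by rw [hg']; simp [norm_mul]
    _ ≤ (1 / (1 - (t*‖z‖)^2)) * ‖z‖ := by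
        apply mul_le_mul_of_nonneg_right hd hzn0
    _ = ‖z‖ / (1 - t^2*‖z‖^2) := by rw [div_mul_eq_mul_div, one_mul]; ring_nf
  have hbint : IntervalIntegrable (fun t => ‖z‖ / (1 - t^2 * ‖z‖^2)) MeasureTheory.volume 0 1 := by
    apply ContinuousOn.intervalIntegrable
    rw [Set.uIcc_of_le zero_le_one]
    apply ContinuousOn.div continuousOn_const (by fun_prop)
    intro t ht
    have : t * ‖z‖ < 1 := by nlinarith [ht.2, hzn0, hzn, ht.1]
    nlinarith [mul_nonneg ht.1 hzn0]
  have hkey := key_integral ‖z‖ hzn0 hzn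
  have hlog0 : 0 ≤ (1/2) * Real.log ((1 + ‖z‖) / (1 - ‖z‖)) := by
    have h1 : (1:ℝ) ≤ (1 + ‖z‖)/(1 - ‖z‖) := by
      rw [le_div_iff₀ (by linarith)]
      linarith
    have := Real.log_nonneg h1
    linarith
  calc ‖f z‖ = ‖∫ t in (0:ℝ)..1, g' t‖ := by rw [heq, h0, sub_zero]
  _ ≤ |∫ t in (0:ℝ)..1, ‖z‖ / (1 - t^2 * ‖z‖^2)| := by
      apply intervalIntegral.norm_integral_le_abs_of_norm_le _ hbint
      rw [Set.uIoc_of_le zero_le_one]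
      exact MeasureTheory.ae_restrict_of_forall_mem measurableSet_Ioc hnb
  _ = (1/2) * Real.log ((1 + ‖z‖) / (1 - ‖z‖)) := by
      rw [hkey, _root_.abs_of_nonneg hlog0]

lemma slit_aux (u : ℂ) (hu : ‖u‖ < 1) : (1 + u) ∈ Complex.slitPlane := by
  left
  have h1 : |u.re| ≤ ‖u‖ := by
    simpa using Complex.abs_re_le_norm u
  have : -‖u‖ ≤ u.re := by
    cases' abs_le.mp h1 with h _
    linarith
  simp only [Complex.add_re, Complex.one_re]
  linarith

lemma extremal_mem (z : ℂ) (hz : z ∈ unitDisk) :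
    (1/2) * Real.log ((1 + ‖z‖) / (1 - ‖z‖)) ∈
      {r : ℝ | ∃ f : ℂ → ℂ, IsBlochFn f ∧ f 0 = 0 ∧ blochNorm f ≤ 1 ∧ r = ‖f z‖} := by
  have hzn : ‖z‖ < 1 := by simpa [unitDisk] using hz
  have hzn0 : (0:ℝ) ≤ ‖z‖ := norm_nonneg z
  set c : ℂ := if h : z = 0 then 1 else (starRingEnd ℂ) z / (‖z‖ : ℂ) with hc
  have hcn : ‖c‖ = 1 := by
    rw [hc]
    split_ifs with h
    · simp
    · have : ‖z‖ ≠ 0 := norm_ne_zero_iff.mpr h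
      rw [norm_div]
      rw [Complex.norm_conj, Complex.norm_real, Real.norm_eq_abs, _root_.abs_of_nonneg (norm_nonneg z)]
      field_simp
  have hcz : c * z = (‖z‖ : ℂ) := by
    rw [hc]
    split_ifs with h
    · simp [h]
    · have hne : (‖z‖ : ℂ) ≠ 0 := by
        simpa using norm_ne_zero_iff.mpr h
      rw [div_mul_eq_mul_div, mul_comm, Complex.mul_conj, Complex.normSq_eq_norm_sq]
      push_cast at hne ⊢
      rw [div_eq_iff hne]
      ring
  set f : ℂ → ℂ := fun w => (1/2 : ℂ) * (Complex.log (1 + c*w) - Complex.log (1 - c*w)) with hfdef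
  -- norms
  have hcw : ∀ w ∈ unitDisk, ‖c * w‖ < 1 := by
    intro w hw
    have : ‖w‖ < 1 := by simpa [unitDisk] using hw
    rw [norm_mul, hcn, one_mul]
    exact this
  have hne1 : ∀ w ∈ unitDisk, (1 + c*w) ≠ 0 := fun w hw =>
    Complex.slitPlane_ne_zero (slit_aux _ (hcw w hw))
  have hne2 : ∀ w ∈ unitDisk, (1 - c*w) ≠ 0 := by
    intro w hw
    have := Complex.slitPlane_ne_zero (slit_aux (-(c*w)) (by simpa using hcw w hw))
    simpa [sub_eq_add_neg] using this
  -- derivative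
  have hD : ∀ w ∈ unitDisk, HasDerivAt f (c / (1 - (c*w)^2)) w := by
    intro w hw
    have d1 : HasDerivAt (fun w : ℂ => 1 + c*w) c w := by
      simpa using ((hasDerivAt_id w).const_mul c).const_add 1
    have d2 : HasDerivAt (fun w : ℂ => 1 - c*w) (-c) w := by
      simpa using ((hasDerivAt_id w).const_mul c).const_sub 1
    have l1 := d1.clog (slit_aux _ (hcw w hw))
    have l2 := d2.clog (by
      have := slit_aux (-(c*w)) (by simpa using hcw w hw)
      simpa [sub_eq_add_neg] using this)
    have := (l1.sub l2).const_mul (1/2 : ℂ)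
    refine this.congr_deriv ?_
    have h4 : 1 - (c*w)^2 = (1 - c*w) * (1 + c*w) := by ring
    rw [h4]
    field_simp [hne1 w hw, hne2 w hw]
    ring
  have hDval : ∀ w ∈ unitDisk, deriv f w = c / (1 - (c*w)^2) := fun w hw =>
    (hD w hw).deriv
  -- derivative bound
  have hbd : ∀ w ∈ unitDisk, (1 - ‖w‖^2) * ‖deriv f w‖ ≤ 1 := by
    intro w hw
    have hwn : ‖w‖ < 1 := by simpa [unitDisk] using hw
    have hwpos : 0 < 1 - ‖w‖^2 := by nlinarith [norm_nonneg w]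
    rw [hDval w hw, norm_div, hcn]
    have hlow : 1 - ‖w‖^2 ≤ ‖1 - (c*w)^2‖ := by
      have := norm_sub_norm_le (1:ℂ) ((c*w)^2)
      simp only [norm_one, norm_pow, norm_mul, hcn, one_mul] at this
      linarith
    have hdpos : 0 < ‖1 - (c*w)^2‖ := lt_of_lt_of_le hwpos hlow
    rw [mul_comm, div_mul_eq_mul_div, one_mul, div_le_one hdpos]
    exact hlow
  -- f is Bloch
  have hdiff : DifferentiableOn ℂ f unitDisk := by
    intro w hw
    have d1 : DifferentiableAt ℂ (fun w : ℂ => 1 + c*w) w := by fun_prop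
    have d2 : DifferentiableAt ℂ (fun w : ℂ => 1 - c*w) w := by fun_prop
    have l1 := (Complex.differentiableAt_log (slit_aux _ (hcw w hw))).comp w d1
    have l2 := (Complex.differentiableAt_log (by
      have := slit_aux (-(c*w)) (by simpa using hcw w hw)
      simpa [sub_eq_add_neg] using this)).comp w d2
    exact (((l1.sub l2).const_mul (1/2:ℂ)).differentiableWithinAt)
  have hBdd : BddAbove ((fun w => (1 - ‖w‖ ^ 2) * ‖deriv f w‖) '' unitDisk) := by
    refine ⟨1, ?_⟩
    rintro r ⟨w, hw, rfl⟩
    exact hbd w hw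
  have hf0 : f 0 = 0 := by simp [hfdef]
  have hbeta : betaSem f ≤ 1 := by
    apply csSup_le
    · exact ⟨_, ⟨0, by simp [unitDisk], rfl⟩⟩
    · rintro r ⟨w, hw, rfl⟩
      exact hbd w hw
  have hbn : blochNorm f ≤ 1 := by
    unfold blochNorm
    rw [hf0]
    simpa using hbeta
  -- value at z
  have hval : ‖f z‖ = (1/2) * Real.log ((1 + ‖z‖) / (1 - ‖z‖)) := by
    have h1 : (1 : ℂ) + c*z = ((1 + ‖z‖ : ℝ) : ℂ) := by rw [hcz]; push_cast; ring
    have h2 : (1 : ℂ) - c*z = ((1 - ‖z‖ : ℝ) : ℂ) := by rw [hcz]; push_cast; ring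
    have hl1 : Complex.log ((1 + ‖z‖ : ℝ) : ℂ) = ((Real.log (1 + ‖z‖) : ℝ) : ℂ) :=
      (Complex.ofReal_log (by linarith)).symm
    have hl2 : Complex.log ((1 - ‖z‖ : ℝ) : ℂ) = ((Real.log (1 - ‖z‖) : ℝ) : ℂ) :=
      (Complex.ofReal_log (by linarith)).symm
    have : f z = (((1/2) * (Real.log (1 + ‖z‖) - Real.log (1 - ‖z‖)) : ℝ) : ℂ) := by
      rw [hfdef]
      simp only [h1, h2, hl1, hl2]
      push_cast
      ring
    rw [this, Complex.norm_real, Real.norm_eq_abs]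
    rw [Real.log_div (by linarith) (by linarith)]
    rw [_root_.abs_of_nonneg]
    have hlg1 : 0 ≤ Real.log (1 + ‖z‖) := Real.log_nonneg (by linarith)
    have hlg2 : Real.log (1 - ‖z‖) ≤ 0 :=
      Real.log_nonpos (by linarith) (by linarith)
    linarith
  exact ⟨f, ⟨hdiff, hBdd⟩, hf0, hbn, hval.symm⟩

/-- ω(z) = (1/2) log((1+|z|)/(1-|z|)) = ρ(z,0) for all z ∈ 𝔻. -/
theorem omega_eq_poincare (z : ℂ) (hz : z ∈ unitDisk) :
    omegaD z = (1 / 2) * Real.log ((1 + ‖z‖) / (1 - ‖z‖)) := by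
  have hub : ∀ r ∈ {r : ℝ | ∃ f : ℂ → ℂ, IsBlochFn f ∧ f 0 = 0 ∧ blochNorm f ≤ 1 ∧ r = ‖f z‖},
      r ≤ (1 / 2) * Real.log ((1 + ‖z‖) / (1 - ‖z‖)) := by
    rintro r ⟨f, hf, h0, hb, rfl⟩
    exact upper_bound f hf h0 hb z hz
  exact le_antisymm (csSup_le ⟨_, extremal_mem z hz⟩ hub)
    (le_csSup ⟨_, hub⟩ (extremal_mem z hz))
end
end

section
/- Let μ : 𝔻 → (0,∞) be continuous, ψ holomorphic on 𝔻, and φ a holomorphic self-map of 𝔻. The weighted composition operator W_{ψ,φ} : ℬ(𝔻) → H^∞_μ(𝔻) is bounded if and only if ψ ∈ H^∞_μ(𝔻) and υ_μ(ψ,φ) := sup_{z∈𝔻} μ(z)|ψ(z)| ω(φ(z)) < ∞; moreover in that case ‖W_{ψ,φ}‖ = max{ ‖ψ‖_μ, υ_μ(ψ,φ) }. -/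
open Complex Filter

noncomputable section

-- auxiliary lemmas

lemma unitDisk_open : IsOpen unitDisk := Metric.isOpen_ball

lemma mem_unitDisk {z : ℂ} : z ∈ unitDisk ↔ ‖z‖ < 1 := by
  simp [unitDisk, Metric.mem_ball, dist_zero_right]

lemma zero_mem_unitDisk : (0 : ℂ) ∈ unitDisk := by simp [mem_unitDisk]

lemma betaSem_nonneg {f : ℂ → ℂ} (hf : IsBlochFn f) : 0 ≤ betaSem f := by
  have h0 : (1 - ‖(0:ℂ)‖ ^ 2) * ‖deriv f 0‖ ∈
      ((fun z => (1 - ‖z‖ ^ 2) * ‖deriv f z‖) '' unitDisk) :=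
    ⟨0, zero_mem_unitDisk, rfl⟩
  have := le_csSup hf.2 h0
  have hn : 0 ≤ (1 - ‖(0:ℂ)‖ ^ 2) * ‖deriv f 0‖ := by
    simp [norm_nonneg]
  exact hn.trans this

lemma le_betaSem {f : ℂ → ℂ} (hf : IsBlochFn f) {z : ℂ} (hz : z ∈ unitDisk) :
    (1 - ‖z‖ ^ 2) * ‖deriv f z‖ ≤ betaSem f :=
  le_csSup hf.2 ⟨z, hz, rfl⟩

/-- Crude growth estimate. -/
lemma growth {f : ℂ → ℂ} (hf : IsBlochFn f) {w : ℂ} (hw : w ∈ unitDisk) :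
    ‖f w - f 0‖ ≤ betaSem f * (‖w‖ / (1 - ‖w‖ ^ 2)) := by
  have hw1 : ‖w‖ < 1 := mem_unitDisk.mp hw
  have hpos : (0:ℝ) < 1 - ‖w‖ ^ 2 := by nlinarith [norm_nonneg w]
  set C : ℝ := betaSem f / (1 - ‖w‖ ^ 2) with hC
  have hsub : Metric.closedBall (0:ℂ) ‖w‖ ⊆ unitDisk := by
    intro z hz
    simp only [Metric.mem_closedBall, dist_zero_right] at hz
    exact mem_unitDisk.mpr (lt_of_le_of_lt hz hw1)
  have hdiff : ∀ z ∈ Metric.closedBall (0:ℂ) ‖w‖, DifferentiableAt ℂ f z := fun z hz =>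
    hf.1.differentiableAt (unitDisk_open.mem_nhds (hsub hz))
  have hbound : ∀ z ∈ Metric.closedBall (0:ℂ) ‖w‖, ‖deriv f z‖ ≤ C := by
    intro z hz
    have hz' : ‖z‖ ≤ ‖w‖ := by
      simpa [dist_zero_right] using hz
    have h1 : (1:ℝ) - ‖w‖ ^ 2 ≤ 1 - ‖z‖ ^ 2 := by nlinarith [norm_nonneg z, norm_nonneg w]
    have h2 := le_betaSem hf (hsub hz)
    rw [hC, le_div_iff₀ hpos]
    calc ‖deriv f z‖ * (1 - ‖w‖ ^ 2) ≤ ‖deriv f z‖ * (1 - ‖z‖ ^ 2) := by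
          exact mul_le_mul_of_nonneg_left h1 (norm_nonneg _)
      _ = (1 - ‖z‖ ^ 2) * ‖deriv f z‖ := mul_comm _ _
      _ ≤ betaSem f := h2
  have hconv : Convex ℝ (Metric.closedBall (0:ℂ) ‖w‖) := convex_closedBall _ _
  have hyw : w ∈ Metric.closedBall (0:ℂ) ‖w‖ := by
    rw [Metric.mem_closedBall, dist_zero_right]
  have h := hconv.norm_image_sub_le_of_norm_deriv_le hdiff hbound
    (Metric.mem_closedBall_self (norm_nonneg w)) hyw
  calc ‖f w - f 0‖ ≤ C * ‖w - 0‖ := h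
    _ = betaSem f * (‖w‖ / (1 - ‖w‖ ^ 2)) := by
        rw [sub_zero, hC]; ring

lemma isBloch_const (c : ℂ) : IsBlochFn (fun _ => c) ∧ betaSem (fun _ => c) = 0 := by
  have himg : ((fun z => (1 - ‖z‖ ^ 2) * ‖deriv (fun _ : ℂ => c) z‖) '' unitDisk) = {0} := by
    have : (fun z : ℂ => (1 - ‖z‖ ^ 2) * ‖deriv (fun _ : ℂ => c) z‖) = fun _ => 0 := by
      funext z; simp
    rw [this]
    exact Set.Nonempty.image_const ⟨0, zero_mem_unitDisk⟩ 0
  refine ⟨⟨differentiableOn_const c, ?_⟩, ?_⟩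
  · rw [himg]; exact bddAbove_singleton
  · rw [betaSem, himg, csSup_singleton]

lemma omegaD_nonneg {w : ℂ} (hw : w ∈ unitDisk) : 0 ≤ omegaD w := by
  apply Real.sSup_nonneg
  rintro r ⟨f, _, _, _, rfl⟩
  exact norm_nonneg _

lemma omegaSet_bddAbove {w : ℂ} (hw : w ∈ unitDisk) :
    BddAbove {r : ℝ | ∃ f : ℂ → ℂ, IsBlochFn f ∧ f 0 = 0 ∧ blochNorm f ≤ 1 ∧ r = ‖f w‖} := by
  refine ⟨‖w‖ / (1 - ‖w‖ ^ 2), ?_⟩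
  rintro r ⟨f, hf, hf0, hfn, rfl⟩
  have hg := growth hf hw
  rw [hf0, sub_zero] at hg
  have hβ : betaSem f ≤ 1 := by
    have : 0 ≤ ‖f 0‖ := norm_nonneg _
    unfold blochNorm at hfn; linarith
  have ht : (0:ℝ) ≤ ‖w‖ / (1 - ‖w‖ ^ 2) := by
    have hw1 : ‖w‖ < 1 := mem_unitDisk.mp hw
    have : (0:ℝ) < 1 - ‖w‖ ^ 2 := by nlinarith [norm_nonneg w]
    positivity
  calc ‖f w‖ ≤ betaSem f * (‖w‖ / (1 - ‖w‖ ^ 2)) := hg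
    _ ≤ 1 * (‖w‖ / (1 - ‖w‖ ^ 2)) := mul_le_mul_of_nonneg_right hβ ht
    _ = _ := one_mul _

lemma le_omegaD {f : ℂ → ℂ} (hf : IsBlochFn f) (hf0 : f 0 = 0) (hfn : blochNorm f ≤ 1)
    {w : ℂ} (hw : w ∈ unitDisk) : ‖f w‖ ≤ omegaD w :=
  le_csSup (omegaSet_bddAbove hw) ⟨f, hf, hf0, hfn, rfl⟩

/-- Main pointwise estimate: ‖f w‖ ≤ ‖f 0‖ + β_f ω(w). -/
lemma norm_le_bloch {f : ℂ → ℂ} (hf : IsBlochFn f) {w : ℂ} (hw : w ∈ unitDisk) :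
    ‖f w‖ ≤ ‖f 0‖ + betaSem f * omegaD w := by
  rcases eq_or_lt_of_le (betaSem_nonneg hf) with hβ | hβ
  · have hg := growth hf hw
    rw [← hβ, zero_mul] at hg
    have : ‖f w‖ ≤ ‖f 0‖ + ‖f w - f 0‖ := by
      calc ‖f w‖ = ‖f 0 + (f w - f 0)‖ := by ring_nf
        _ ≤ ‖f 0‖ + ‖f w - f 0‖ := norm_add_le _ _
    rw [← hβ, zero_mul]
    linarith
  · set β := betaSem f with hβdef
    set g : ℂ → ℂ := fun z => (f z - f 0) / (β : ℂ) with hgdef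
    have hβne : (β : ℂ) ≠ 0 := by
      simp only [ne_eq, Complex.ofReal_eq_zero]
      exact ne_of_gt hβ
    have hgd : DifferentiableOn ℂ g unitDisk := (hf.1.sub_const _).div_const _
    have hderiv : ∀ z ∈ unitDisk, deriv g z = deriv f z / (β : ℂ) := by
      intro z hz
      rw [hgdef]
      simp only [deriv_div_const, deriv_sub_const]
    have hbd : ∀ r ∈ ((fun z => (1 - ‖z‖ ^ 2) * ‖deriv g z‖) '' unitDisk), r ≤ 1 := by
      rintro r ⟨z, hz, rfl⟩
      show (1 - ‖z‖ ^ 2) * ‖deriv g z‖ ≤ 1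
      rw [hderiv z hz]
      have h2 := le_betaSem hf hz
      rw [norm_div]
      have hβn : ‖(β:ℂ)‖ = β := by
        rw [Complex.norm_real, Real.norm_of_nonneg hβ.le]
      rw [hβn, ← mul_div_assoc, div_le_one hβ]
      exact h2
    have hgbloch : IsBlochFn g := ⟨hgd, ⟨1, fun r hr => hbd r hr⟩⟩
    have hg0 : g 0 = 0 := by simp [hgdef]
    have hgβ : betaSem g ≤ 1 :=
      csSup_le ⟨_, ⟨0, zero_mem_unitDisk, rfl⟩⟩ hbd
    have hgn : blochNorm g ≤ 1 := by
      rw [blochNorm, hg0, norm_zero, zero_add]; exact hgβ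
    have hle := le_omegaD hgbloch hg0 hgn hw
    have hgw : ‖g w‖ = ‖f w - f 0‖ / β := by
      rw [hgdef]
      simp only [norm_div, Complex.norm_real, Real.norm_of_nonneg hβ.le]
    rw [hgw, div_le_iff₀ hβ] at hle
    have : ‖f w‖ ≤ ‖f 0‖ + ‖f w - f 0‖ := by
      calc ‖f w‖ = ‖f 0 + (f w - f 0)‖ := by ring_nf
        _ ≤ ‖f 0‖ + ‖f w - f 0‖ := norm_add_le _ _
    calc ‖f w‖ ≤ ‖f 0‖ + ‖f w - f 0‖ := this
      _ ≤ ‖f 0‖ + omegaD w * β := by linarith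
      _ = ‖f 0‖ + β * omegaD w := by ring

/-- W_{ψ,φ} : ℬ(𝔻) → H^∞_μ(𝔻) is bounded iff ψ ∈ H^∞_μ(𝔻) and
υ_μ(ψ,φ) = sup_z μ(z)|ψ(z)|ω(φ(z)) < ∞, in which case
‖W_{ψ,φ}‖ = max{‖ψ‖_μ, υ_μ(ψ,φ)}. -/
theorem bounded_iff_and_norm (μ : ℂ → ℝ) (ψ φ : ℂ → ℂ)
    (hμc : ContinuousOn μ unitDisk) (hμp : ∀ z ∈ unitDisk, 0 < μ z)
    (hψ : DifferentiableOn ℂ ψ unitDisk)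
    (hφ : DifferentiableOn ℂ φ unitDisk) (hφs : ∀ z ∈ unitDisk, φ z ∈ unitDisk) :
    (WBounded μ ψ φ ↔
      BddAbove ((fun z => μ z * ‖ψ z‖) '' unitDisk) ∧
        BddAbove ((fun z => μ z * (‖ψ z‖ * omegaD (φ z))) '' unitDisk)) ∧
    (WBounded μ ψ φ →
      WNorm μ ψ φ =
        max (sSup ((fun z => μ z * ‖ψ z‖) '' unitDisk))
          (sSup ((fun z => μ z * (‖ψ z‖ * omegaD (φ z))) '' unitDisk))) := by
  set S1 := (fun z => μ z * ‖ψ z‖) '' unitDisk with hS1def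
  set S2 := (fun z => μ z * (‖ψ z‖ * omegaD (φ z))) '' unitDisk with hS2def
  set W := WSet μ ψ φ with hWdef
  -- constant one function gives members of W
  have hone : IsBlochFn (fun _ : ℂ => (1:ℂ)) ∧ betaSem (fun _ : ℂ => (1:ℂ)) = 0 :=
    isBloch_const 1
  have honen : blochNorm (fun _ : ℂ => (1:ℂ)) ≤ 1 := by
    rw [blochNorm, hone.2]; simp
  have h1 : ∀ z ∈ unitDisk, μ z * ‖ψ z‖ ∈ W := by
    intro z hz
    exact ⟨fun _ => 1, hone.1, honen, z, hz, by simp⟩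
  have hWne : W.Nonempty := ⟨μ 0 * ‖ψ 0‖, h1 0 zero_mem_unitDisk⟩
  have hWnn : ∀ r ∈ W, 0 ≤ r := by
    rintro r ⟨f, hf, hfn, z, hz, rfl⟩
    have := (hμp z hz).le
    positivity
  -- any upper bound of W bounds the S2 elements
  have h2 : ∀ c ∈ upperBounds W, ∀ z ∈ unitDisk, μ z * (‖ψ z‖ * omegaD (φ z)) ≤ c := by
    intro c hc z hz
    have hc0 : 0 ≤ c := (hWnn _ (h1 0 zero_mem_unitDisk)).trans (hc (h1 0 zero_mem_unitDisk))
    set a := μ z * ‖ψ z‖ with hadef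
    have ha0 : 0 ≤ a := by
      have := (hμp z hz).le; positivity
    have hassoc : μ z * (‖ψ z‖ * omegaD (φ z)) = a * omegaD (φ z) := by
      rw [hadef, mul_assoc]
    rcases eq_or_lt_of_le ha0 with ha | ha
    · rw [hassoc, ← ha, zero_mul]; exact hc0
    · rw [hassoc]
      have hΩne : {r : ℝ | ∃ f : ℂ → ℂ, IsBlochFn f ∧ f 0 = 0 ∧ blochNorm f ≤ 1 ∧
          r = ‖f (φ z)‖}.Nonempty :=
        ⟨0, ⟨fun _ => 0, (isBloch_const 0).1, rfl, by
          rw [blochNorm, (isBloch_const 0).2]; simp, by simp⟩⟩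
      have hωle : omegaD (φ z) ≤ c / a := by
        apply csSup_le hΩne
        rintro r ⟨g, hg, hg0, hgn, rfl⟩
        rw [le_div_iff₀ ha]
        have hmem : μ z * (‖ψ z‖ * ‖g (φ z)‖) ∈ W := ⟨g, hg, hgn, z, hz, rfl⟩
        have := hc hmem
        calc ‖g (φ z)‖ * a = μ z * (‖ψ z‖ * ‖g (φ z)‖) := by rw [hadef]; ring
          _ ≤ c := this
      calc a * omegaD (φ z) ≤ a * (c / a) := mul_le_mul_of_nonneg_left hωle ha0
        _ = c := by field_simp
  -- S1, S2 elements are nonneg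
  have hS1nn : ∀ r ∈ S1, 0 ≤ r := by
    rintro r ⟨z, hz, rfl⟩; have := (hμp z hz).le; positivity
  have hS2nn : ∀ r ∈ S2, 0 ≤ r := by
    rintro r ⟨z, hz, rfl⟩
    have := (hμp z hz).le
    have := omegaD_nonneg (hφs z hz)
    positivity
  -- upper bound of W by max of sups
  have h3 : ∀ (hB1 : BddAbove S1) (hB2 : BddAbove S2), ∀ r ∈ W, r ≤ max (sSup S1) (sSup S2) := by
    intro hB1 hB2 r hr
    obtain ⟨f, hf, hfn, z, hz, rfl⟩ := hr
    have hφz : φ z ∈ unitDisk := hφs z hz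
    have hfe : ‖f (φ z)‖ ≤ ‖f 0‖ + betaSem f * omegaD (φ z) := norm_le_bloch hf hφz
    have hμ0 : 0 ≤ μ z := (hμp z hz).le
    have hω0 : 0 ≤ omegaD (φ z) := omegaD_nonneg hφz
    have hβ0 : 0 ≤ betaSem f := betaSem_nonneg hf
    have ha0 : (0:ℝ) ≤ ‖f 0‖ := norm_nonneg _
    have hsum : ‖f 0‖ + betaSem f ≤ 1 := hfn
    have e1 : μ z * ‖ψ z‖ ≤ sSup S1 := le_csSup hB1 ⟨z, hz, rfl⟩
    have e2 : μ z * (‖ψ z‖ * omegaD (φ z)) ≤ sSup S2 := le_csSup hB2 ⟨z, hz, rfl⟩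
    have hM1 : sSup S1 ≤ max (sSup S1) (sSup S2) := le_max_left _ _
    have hM2 : sSup S2 ≤ max (sSup S1) (sSup S2) := le_max_right _ _
    have hMnn : 0 ≤ max (sSup S1) (sSup S2) :=
      le_trans (hS1nn _ ⟨0, zero_mem_unitDisk, rfl⟩) (le_trans (le_csSup hB1 ⟨0, zero_mem_unitDisk, rfl⟩) hM1)
    have hψ0 : 0 ≤ ‖ψ z‖ := norm_nonneg _
    calc μ z * (‖ψ z‖ * ‖f (φ z)‖)
        ≤ μ z * (‖ψ z‖ * (‖f 0‖ + betaSem f * omegaD (φ z))) := by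
          apply mul_le_mul_of_nonneg_left _ hμ0
          exact mul_le_mul_of_nonneg_left hfe hψ0
      _ = ‖f 0‖ * (μ z * ‖ψ z‖) + betaSem f * (μ z * (‖ψ z‖ * omegaD (φ z))) := by ring
      _ ≤ ‖f 0‖ * max (sSup S1) (sSup S2) + betaSem f * max (sSup S1) (sSup S2) := by
          gcongr
          · exact e1.trans hM1
          · exact e2.trans hM2
      _ = (‖f 0‖ + betaSem f) * max (sSup S1) (sSup S2) := by ring
      _ ≤ 1 * max (sSup S1) (sSup S2) := mul_le_mul_of_nonneg_right hsum hMnn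
      _ = _ := one_mul _
  constructor
  · constructor
    · intro hW
      obtain ⟨c, hc⟩ := hW
      constructor
      · exact ⟨c, by rintro r ⟨z, hz, rfl⟩; exact hc (h1 z hz)⟩
      · exact ⟨c, by rintro r ⟨z, hz, rfl⟩; exact h2 c hc z hz⟩
    · rintro ⟨hB1, hB2⟩
      exact ⟨max (sSup S1) (sSup S2), fun r hr => h3 hB1 hB2 r hr⟩
  · intro hW
    obtain ⟨c, hc⟩ := hW
    have hB1 : BddAbove S1 := ⟨c, by rintro r ⟨z, hz, rfl⟩; exact hc (h1 z hz)⟩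
    have hB2 : BddAbove S2 := ⟨c, by rintro r ⟨z, hz, rfl⟩; exact h2 c hc z hz⟩
    have hWB : BddAbove W := ⟨c, hc⟩
    apply le_antisymm
    · exact csSup_le hWne (h3 hB1 hB2)
    · apply max_le
      · have hS1ne : S1.Nonempty := ⟨μ 0 * ‖ψ 0‖, ⟨0, zero_mem_unitDisk, rfl⟩⟩
        exact csSup_le hS1ne
          (by rintro r ⟨z, hz, rfl⟩; exact le_csSup hWB (h1 z hz))
      · have hS2ne : S2.Nonempty := ⟨μ 0 * (‖ψ 0‖ * omegaD (φ 0)), ⟨0, zero_mem_unitDisk, rfl⟩⟩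
        apply csSup_le hS2ne
        rintro r ⟨z, hz, rfl⟩
        exact h2 (sSup W) (fun x hx => le_csSup hWB hx) z hz
end
end

section
/- Fix λ ∈ 𝔻 and let h(z) = (1/(2+log 4)) · Log(4/(1 - z·conj(λ))), where Log is the principal branch of the logarithm. Then h is holomorphic on 𝔻, belongs to the little Bloch space (i.e., (1-|z|²)|h'(z)| → 0 as |z| → 1), and ‖h‖_ℬ = |h(0)| + sup_z (1-|z|²)|h'(z)| ≤ 1. -/
open Complex Filter

noncomputable section

lemma aux_gne (a z : ℂ) (ha : ‖a‖ < 1) (hz : ‖z‖ < 1) :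
    1 - ‖z‖ * ‖a‖ ≤ ‖1 - z * (starRingEnd ℂ) a‖ ∧ 0 < 1 - ‖z‖ * ‖a‖ := by
  constructor
  · calc 1 - ‖z‖ * ‖a‖ = ‖(1:ℂ)‖ - ‖z * (starRingEnd ℂ) a‖ := by
          rw [norm_mul, RCLike.norm_conj]; simp
    _ ≤ ‖1 - z * (starRingEnd ℂ) a‖ := norm_sub_norm_le _ _
  · nlinarith [norm_nonneg z, norm_nonneg a]

lemma aux_gne0 (a z : ℂ) (ha : ‖a‖ < 1) (hz : ‖z‖ < 1) :
    (1 - z * (starRingEnd ℂ) a) ≠ 0 := by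
  obtain ⟨h1, h2⟩ := aux_gne a z ha hz
  exact norm_pos_iff.mp (lt_of_lt_of_le h2 h1)

lemma aux_slit (a z : ℂ) (ha : ‖a‖ < 1) (hz : ‖z‖ < 1) :
    (4 / (1 - z * (starRingEnd ℂ) a)) ∈ Complex.slitPlane := by
  obtain ⟨h1, h2⟩ := aux_gne a z ha hz
  have hre : 0 < (1 - z * (starRingEnd ℂ) a).re := by
    have := Complex.re_le_norm (z * (starRingEnd ℂ) a)
    have hn : ‖z * (starRingEnd ℂ) a‖ = ‖z‖ * ‖a‖ := by rw [norm_mul, RCLike.norm_conj]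
    simp only [Complex.sub_re, Complex.one_re]
    linarith
  have hns : 0 < Complex.normSq (1 - z * (starRingEnd ℂ) a) :=
    Complex.normSq_pos.mpr (aux_gne0 a z ha hz)
  left
  rw [Complex.div_re]
  norm_num
  apply div_pos _ hns
  simp only [Complex.sub_re, Complex.one_re, Complex.mul_re, Complex.conj_re,
    Complex.conj_im] at hre
  linarith

lemma aux_hasDerivAt (a z : ℂ) (ha : ‖a‖ < 1) (hz : ‖z‖ < 1) :
    HasDerivAt (fun z => ((2 + Real.log 4 : ℝ) : ℂ)⁻¹ *
      Complex.log (4 / (1 - z * (starRingEnd ℂ) a)))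
      (((2 + Real.log 4 : ℝ) : ℂ)⁻¹ * ((starRingEnd ℂ) a / (1 - z * (starRingEnd ℂ) a))) z := by
  have hgn := aux_gne0 a z ha hz
  have hg : HasDerivAt (fun z => 1 - z * (starRingEnd ℂ) a) (-(starRingEnd ℂ) a) z := by
    simpa using (hasDerivAt_mul_const ((starRingEnd ℂ) a)).const_sub 1
  have hu : HasDerivAt (fun z => 4 / (1 - z * (starRingEnd ℂ) a))
      ((0 * (1 - z * (starRingEnd ℂ) a) - 4 * -(starRingEnd ℂ) a) /
        (1 - z * (starRingEnd ℂ) a) ^ 2) z :=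
    (hasDerivAt_const z 4).div hg hgn
  have hlog := (Complex.hasDerivAt_log (aux_slit a z ha hz)).comp z hu
  have H := hlog.const_mul ((2 + Real.log 4 : ℝ) : ℂ)⁻¹
  have heq : ((4:ℂ) / (1 - z * (starRingEnd ℂ) a))⁻¹ *
      ((0 * (1 - z * (starRingEnd ℂ) a) - 4 * -(starRingEnd ℂ) a) /
        (1 - z * (starRingEnd ℂ) a) ^ 2)
      = (starRingEnd ℂ) a / (1 - z * (starRingEnd ℂ) a) := by
    rw [inv_div]; field_simp; ring
  rw [heq] at H
  exact H

lemma aux_clog4_pos : (0:ℝ) < 2 + Real.log 4 := by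
  have : 0 < Real.log 4 := Real.log_pos (by norm_num)
  linarith

lemma aux_deriv_norm (a z : ℂ) (ha : ‖a‖ < 1) (hz : ‖z‖ < 1) :
    ‖deriv (fun z => ((2 + Real.log 4 : ℝ) : ℂ)⁻¹ *
      Complex.log (4 / (1 - z * (starRingEnd ℂ) a))) z‖
      = (2 + Real.log 4)⁻¹ * (‖a‖ / ‖1 - z * (starRingEnd ℂ) a‖) := by
  rw [(aux_hasDerivAt a z ha hz).deriv]
  rw [norm_mul, norm_inv, Complex.norm_real, norm_div, RCLike.norm_conj,
    Real.norm_eq_abs, abs_of_pos aux_clog4_pos]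

lemma aux_bound (a z : ℂ) (ha : ‖a‖ < 1) (hz : ‖z‖ < 1) :
    (1 - ‖z‖ ^ 2) * ‖deriv (fun z => ((2 + Real.log 4 : ℝ) : ℂ)⁻¹ *
      Complex.log (4 / (1 - z * (starRingEnd ℂ) a))) z‖ ≤ 2 * (2 + Real.log 4)⁻¹ := by
  rw [aux_deriv_norm a z ha hz]
  obtain ⟨h1, h2⟩ := aux_gne a z ha hz
  set t := ‖z‖; set s := ‖a‖; set G := ‖1 - z * (starRingEnd ℂ) a‖
  have hG : 0 < G := lt_of_lt_of_le h2 h1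
  have ht0 : 0 ≤ t := norm_nonneg z
  have hs0 : 0 ≤ s := norm_nonneg a
  have hc := aux_clog4_pos
  have key : (1 - t ^ 2) * s ≤ 2 * G := by nlinarith
  have h3 : (1 - t ^ 2) * (s / G) ≤ 2 := by
    rw [← mul_div_assoc, div_le_iff₀ hG]
    exact key
  calc (1 - t ^ 2) * ((2 + Real.log 4)⁻¹ * (s / G))
      = ((1 - t ^ 2) * (s / G)) * (2 + Real.log 4)⁻¹ := by ring
    _ ≤ 2 * (2 + Real.log 4)⁻¹ := by
        apply mul_le_mul_of_nonneg_right h3 (by positivity)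

/-- For λ ∈ 𝔻, h(z) = (1/(2+log 4)) Log(4/(1-z·conj λ)) is holomorphic on 𝔻,
lies in the little Bloch space, and has Bloch norm at most 1. -/
theorem little_bloch_test_function (a : ℂ) (ha : a ∈ unitDisk) :
    DifferentiableOn ℂ
        (fun z => ((2 + Real.log 4 : ℝ) : ℂ)⁻¹ * Complex.log (4 / (1 - z * (starRingEnd ℂ) a)))
        unitDisk ∧
      IsBlochFn
        (fun z => ((2 + Real.log 4 : ℝ) : ℂ)⁻¹ * Complex.log (4 / (1 - z * (starRingEnd ℂ) a))) ∧
      (∀ ε > 0, ∃ r < (1 : ℝ), ∀ z ∈ unitDisk, r < ‖z‖ →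
        (1 - ‖z‖ ^ 2) *
            ‖deriv (fun z => ((2 + Real.log 4 : ℝ) : ℂ)⁻¹ *
                Complex.log (4 / (1 - z * (starRingEnd ℂ) a))) z‖ < ε) ∧
      blochNorm
          (fun z => ((2 + Real.log 4 : ℝ) : ℂ)⁻¹ *
            Complex.log (4 / (1 - z * (starRingEnd ℂ) a))) ≤ 1 := by
  have haa : ‖a‖ < 1 := mem_unitDisk.mp ha
  have hdiff : DifferentiableOn ℂ
      (fun z => ((2 + Real.log 4 : ℝ) : ℂ)⁻¹ * Complex.log (4 / (1 - z * (starRingEnd ℂ) a)))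
      unitDisk := by
    intro z hz
    exact ((aux_hasDerivAt a z haa (mem_unitDisk.mp hz)).differentiableAt).differentiableWithinAt
  have hbdd : BddAbove ((fun z => (1 - ‖z‖ ^ 2) *
      ‖deriv (fun z => ((2 + Real.log 4 : ℝ) : ℂ)⁻¹ *
        Complex.log (4 / (1 - z * (starRingEnd ℂ) a))) z‖) '' unitDisk) := by
    refine ⟨2 * (2 + Real.log 4)⁻¹, ?_⟩
    rintro r ⟨z, hz, rfl⟩
    exact aux_bound a z haa (mem_unitDisk.mp hz)
  refine ⟨hdiff, ⟨hdiff, hbdd⟩, ?_, ?_⟩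
  · -- little Bloch
    intro ε hε
    have hc := aux_clog4_pos
    set M : ℝ := (2 + Real.log 4)⁻¹ * (‖a‖ / (1 - ‖a‖)) with hM
    have hM0 : 0 ≤ M := by
      apply mul_nonneg (by positivity)
      apply div_nonneg (norm_nonneg a) (by linarith)
    refine ⟨max (1 - ε / (2 * (M + 1))) 0, ?_, ?_⟩
    · apply max_lt _ one_pos
      have : 0 < ε / (2 * (M + 1)) := by positivity
      linarith
    · intro z hz hr
      have hzz := mem_unitDisk.mp hz
      rw [aux_deriv_norm a z haa hzz]
      obtain ⟨h1, h2⟩ := aux_gne a z haa hzz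
      set t := ‖z‖; set s := ‖a‖; set G := ‖1 - z * (starRingEnd ℂ) a‖
      have hG : 0 < G := lt_of_lt_of_le h2 h1
      have ht0 : 0 ≤ t := norm_nonneg z
      have hs0 : 0 ≤ s := norm_nonneg a
      have hsG : 1 - s ≤ G := by
        have : 1 - s ≤ 1 - t * s := by nlinarith
        linarith
      have hs1 : 0 < 1 - s := by linarith
      have hdivle : (2 + Real.log 4)⁻¹ * (s / G) ≤ M := by
        rw [hM]
        gcongr
      have hXnn : 0 ≤ (2 + Real.log 4)⁻¹ * (s / G) := by positivity
      have htb : 1 - t < ε / (2 * (M + 1)) := by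
        have h01 : 1 - ε / (2 * (M + 1)) ≤ max (1 - ε / (2 * (M + 1))) 0 := le_max_left _ _
        linarith
      have hMp : 0 < M + 1 := by linarith
      have hMp2 : (0:ℝ) < 2 * (M + 1) := by linarith
      calc (1 - t ^ 2) * ((2 + Real.log 4)⁻¹ * (s / G))
          ≤ (1 - t ^ 2) * M :=
            mul_le_mul_of_nonneg_left hdivle (by nlinarith)
        _ ≤ (2 * (1 - t)) * (M + 1) := by
            nlinarith [mul_nonneg (mul_nonneg (by linarith : (0:ℝ) ≤ 1 - t)
              (by linarith : (0:ℝ) ≤ 1 - t)) hM0]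
        _ < (2 * (ε / (2 * (M + 1)))) * (M + 1) := by
            apply mul_lt_mul_of_pos_right _ hMp
            linarith
        _ = ε := by field_simp
  · -- Bloch norm ≤ 1
    have hc := aux_clog4_pos
    have h0 : ‖(fun z => ((2 + Real.log 4 : ℝ) : ℂ)⁻¹ *
        Complex.log (4 / (1 - z * (starRingEnd ℂ) a))) 0‖ = (2 + Real.log 4)⁻¹ * Real.log 4 := by
      have h4 : Complex.log (4 / (1 - 0 * (starRingEnd ℂ) a)) = ((Real.log 4 : ℝ) : ℂ) := by
        norm_num
      simp only [h4]
      rw [norm_mul, norm_inv, Complex.norm_real, Complex.norm_real, Real.norm_eq_abs,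
        Real.norm_eq_abs, _root_.abs_of_pos aux_clog4_pos,
        _root_.abs_of_nonneg (Real.log_nonneg (by norm_num : (1:ℝ) ≤ 4))]
    have hsup : betaSem (fun z => ((2 + Real.log 4 : ℝ) : ℂ)⁻¹ *
        Complex.log (4 / (1 - z * (starRingEnd ℂ) a))) ≤ 2 * (2 + Real.log 4)⁻¹ := by
      apply csSup_le
      · exact ⟨_, ⟨0, by simp [mem_unitDisk], rfl⟩⟩
      · rintro r ⟨z, hz, rfl⟩
        exact aux_bound a z haa (mem_unitDisk.mp hz)
    rw [blochNorm, h0]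
    have : (2 + Real.log 4)⁻¹ * Real.log 4 + 2 * (2 + Real.log 4)⁻¹ = 1 := by
      field_simp
      ring
    linarith
end
end

section
/- Fix w ∈ 𝔻 and define f(z) = (Log(4/(1 - z·conj(w))))² / log(4/(1-|w|²)). Then f is holomorphic on 𝔻, f(w) = log(4/(1-|w|²)), and there is a constant C (independent of w) such that ‖f‖_ℬ ≤ C. Moreover, as |w| → 1, the corresponding functions f_w converge to 0 uniformly on compact subsets of 𝔻. -/
open Complex Filter

noncomputable section

/-- The family of test functions f_w(z) = (Log(4/(1-z·conj w)))²/log(4/(1-|w|²)). -/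
def testFn (w : ℂ) : ℂ → ℂ :=
  fun z => (Complex.log (4 / (1 - z * (starRingEnd ℂ) w))) ^ 2 /
    ((Real.log (4 / (1 - ‖w‖ ^ 2)) : ℝ) : ℂ)



lemma one_sub_le_aux (z w : ℂ) : 1 - ‖z‖ * ‖w‖ ≤ ‖1 - z * (starRingEnd ℂ) w‖ := by
  calc 1 - ‖z‖ * ‖w‖ = ‖(1:ℂ)‖ - ‖z * (starRingEnd ℂ) w‖ := by
        simp only [norm_mul, norm_one, RCLike.norm_conj]
  _ ≤ ‖1 - z * (starRingEnd ℂ) w‖ := norm_sub_norm_le _ _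

lemma norm_le_two_aux (z w : ℂ) (h : ‖z‖ * ‖w‖ < 1) : ‖1 - z * (starRingEnd ℂ) w‖ ≤ 2 := by
  calc ‖1 - z * (starRingEnd ℂ) w‖ ≤ ‖(1:ℂ)‖ + ‖z * (starRingEnd ℂ) w‖ := norm_sub_le _ _
  _ ≤ 2 := by simp only [norm_mul, norm_one, RCLike.norm_conj]; linarith

lemma zeta_ne_aux (z w : ℂ) (h : ‖z‖ * ‖w‖ < 1) : 1 - z * (starRingEnd ℂ) w ≠ 0 := by
  intro hc
  have h1 := one_sub_le_aux z w
  rw [hc, norm_zero] at h1; linarith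

lemma slit_aux_s9 (z w : ℂ) (h : ‖z‖ * ‖w‖ < 1) :
    4 / (1 - z * (starRingEnd ℂ) w) ∈ Complex.slitPlane := by
  have hre : 0 < (1 - z * (starRingEnd ℂ) w).re := by
    have h1 : (z * (starRingEnd ℂ) w).re ≤ ‖z * (starRingEnd ℂ) w‖ := by
      simpa using Complex.re_le_norm (z * (starRingEnd ℂ) w)
    simp only [norm_mul, RCLike.norm_conj] at h1
    simp only [Complex.sub_re, Complex.one_re]
    linarith
  have hne := zeta_ne_aux z w h
  left
  have hsq : 0 < Complex.normSq (1 - z * (starRingEnd ℂ) w) := by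
    rwa [Complex.normSq_pos]
  rw [Complex.div_re]
  have h4re : (4 : ℂ).re = 4 := by norm_num
  have h4im : (4 : ℂ).im = 0 := by norm_num
  rw [h4re, h4im, zero_mul, zero_div, add_zero]
  positivity

lemma norm_log_le_aux (z w : ℂ) (h : ‖z‖ * ‖w‖ < 1) :
    ‖Complex.log (4 / (1 - z * (starRingEnd ℂ) w))‖ ≤
      Real.log (4 / (1 - ‖z‖ * ‖w‖)) + Real.pi := by
  set ζ := 1 - z * (starRingEnd ℂ) w with hζdef
  have ht1 : 1 - ‖z‖ * ‖w‖ ≤ ‖ζ‖ := one_sub_le_aux z w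
  have ht0 : 0 < ‖ζ‖ := lt_of_lt_of_le (by linarith) ht1
  have habs : ‖(4 : ℂ) / ζ‖ = 4 / ‖ζ‖ := by
    rw [norm_div]; norm_num
  have h2 : ‖ζ‖ ≤ 2 := norm_le_two_aux z w h
  have hgen : 4 / ‖ζ‖ ≤ 4 / (1 - ‖z‖ * ‖w‖) := by
    apply div_le_div_of_nonneg_left (by norm_num) (by linarith) ht1
  have hlogpos : 0 ≤ Real.log (4 / ‖ζ‖) := by
    apply Real.log_nonneg
    rw [le_div_iff₀ ht0]; linarith
  calc ‖Complex.log (4 / ζ)‖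
      ≤ |(Complex.log (4 / ζ)).re| + |(Complex.log (4 / ζ)).im| :=
        Complex.norm_le_abs_re_add_abs_im _
    _ ≤ Real.log (4 / (1 - ‖z‖ * ‖w‖)) + Real.pi := by
        rw [Complex.log_re, Complex.log_im]
        gcongr
        · rw [habs, _root_.abs_of_nonneg hlogpos]
          exact Real.log_le_log (by positivity) hgen
        · exact Complex.abs_arg_le_pi _

lemma hasDerivAt_testFn_aux (w z : ℂ) (h : ‖z‖ * ‖w‖ < 1) :
    HasDerivAt (fun z => (Complex.log (4 / (1 - z * (starRingEnd ℂ) w))) ^ 2 /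
      ((Real.log (4 / (1 - ‖w‖ ^ 2)) : ℝ) : ℂ))
      (2 * Complex.log (4 / (1 - z * (starRingEnd ℂ) w)) *
        ((starRingEnd ℂ) w / (1 - z * (starRingEnd ℂ) w))
        / ((Real.log (4 / (1 - ‖w‖ ^ 2)) : ℝ) : ℂ)) z := by
  set a := (starRingEnd ℂ) w with ha
  have hζ : 1 - z * a ≠ 0 := zeta_ne_aux z w h
  have h1 : HasDerivAt (fun x => 1 - x * a) (-a) z := by
    simpa using ((hasDerivAt_id z).mul_const a).const_sub 1
  have h2 : HasDerivAt (fun x => (4:ℂ) / (1 - x * a)) (4 * a / (1 - z * a) ^ 2) z := by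
    have h2' := (hasDerivAt_const z (4:ℂ)).div h1 hζ
    exact h2'.congr_deriv (by ring)
  have h3 := (h2.clog (slit_aux_s9 z w h)).pow 2
  have h4 := h3.div_const ((Real.log (4 / (1 - ‖w‖ ^ 2)) : ℝ) : ℂ)
  have key : 4 * a / (1 - z * a) ^ 2 / (4 / (1 - z * a)) = a / (1 - z * a) := by
    field_simp
  rw [key] at h4
  simpa using h4


lemma hasDerivAt_testFn (w z : ℂ) (h : ‖z‖ * ‖w‖ < 1) :
    HasDerivAt (testFn w)
      (2 * Complex.log (4 / (1 - z * (starRingEnd ℂ) w)) *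
        ((starRingEnd ℂ) w / (1 - z * (starRingEnd ℂ) w))
        / ((Real.log (4 / (1 - ‖w‖ ^ 2)) : ℝ) : ℂ)) z :=
  hasDerivAt_testFn_aux w z h

lemma bound_aux (w z : ℂ) (hw : ‖w‖ < 1) (hz : ‖z‖ < 1) :
    (1 - ‖z‖ ^ 2) * ‖deriv (testFn w) z‖ ≤
      4 + 4 * (Real.log 2 + Real.pi) / Real.log 4 := by
  have hzw : ‖z‖ * ‖w‖ < 1 := by nlinarith [norm_nonneg z, norm_nonneg w]
  rw [(hasDerivAt_testFn w z hzw).deriv]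
  have h0 : 0 < 1 - ‖w‖ ^ 2 := by nlinarith [norm_nonneg w]
  set L := Real.log (4 / (1 - ‖w‖ ^ 2)) with hLdef
  set t := ‖1 - z * (starRingEnd ℂ) w‖ with htdef
  have hlog4 : 0 < Real.log 4 := Real.log_pos (by norm_num)
  have hlog2 : 0 < Real.log 2 := Real.log_pos (by norm_num)
  have hpi : 0 < Real.pi := Real.pi_pos
  have hL4 : Real.log 4 ≤ L := by
    apply Real.log_le_log (by norm_num)
    rw [le_div_iff₀ h0]; nlinarith [norm_nonneg w]
  have hL : 0 < L := lt_of_lt_of_le hlog4 hL4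
  have ht1 : 1 - ‖z‖ * ‖w‖ ≤ t := one_sub_le_aux z w
  have ht0 : 0 < t := lt_of_lt_of_le (by linarith) ht1
  have hnorm : ‖2 * Complex.log (4 / (1 - z * (starRingEnd ℂ) w)) *
      ((starRingEnd ℂ) w / (1 - z * (starRingEnd ℂ) w)) / ((L : ℝ) : ℂ)‖ =
      2 * ‖Complex.log (4 / (1 - z * (starRingEnd ℂ) w))‖ * (‖w‖ / t) / L := by
    rw [norm_div, norm_mul, norm_mul, norm_div]
    simp only [RCLike.norm_conj, Complex.norm_real, Real.norm_eq_abs]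
    rw [_root_.abs_of_pos hL]
    norm_num [htdef]
  rw [hnorm]
  set N := ‖Complex.log (4 / (1 - z * (starRingEnd ℂ) w))‖ with hNdef
  have hN0 : 0 ≤ N := norm_nonneg _
  have hN : N ≤ L + (Real.log 2 + Real.pi) := by
    refine le_trans (norm_log_le_aux z w hzw) ?_
    have e1 : 0 < 1 - ‖z‖ * ‖w‖ := by linarith
    have hzww : ‖z‖ * ‖w‖ ≤ ‖w‖ := by
      nlinarith [norm_nonneg w, norm_nonneg z, hz.le]
    have hdiv : 4 / (1 - ‖z‖ * ‖w‖) ≤ 2 * (4 / (1 - ‖w‖ ^ 2)) := by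
      rw [show 2 * (4 / (1 - ‖w‖ ^ 2)) = 8 / (1 - ‖w‖ ^ 2) by ring,
        div_le_div_iff₀ e1 h0]
      nlinarith [sq_nonneg (1 - ‖w‖), norm_nonneg w]
    have := Real.log_le_log (by positivity) hdiv
    rw [Real.log_mul (by norm_num) (by positivity)] at this
    linarith
  have h1z : (1 - ‖z‖ ^ 2) / t ≤ 2 := by
    rw [div_le_iff₀ ht0]
    nlinarith [norm_nonneg z, hw.le, ht1,
      mul_le_mul_of_nonneg_left hw.le (norm_nonneg z), sq_nonneg (1 - ‖z‖)]
  have hz2 : 0 ≤ 1 - ‖z‖ ^ 2 := by nlinarith [norm_nonneg z]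
  calc (1 - ‖z‖ ^ 2) * (2 * N * (‖w‖ / t) / L)
      = ((1 - ‖z‖ ^ 2) / t) * (‖w‖ * (2 * N) / L) := by
        field_simp
        all_goals try ring
        all_goals tauto
    _ ≤ 2 * (1 * (2 * (L + (Real.log 2 + Real.pi))) / L) := by
        gcongr <;> first | exact hw.le | positivity
    _ = 4 + 4 * (Real.log 2 + Real.pi) / L := by
        field_simp
        all_goals try ring
    _ ≤ 4 + 4 * (Real.log 2 + Real.pi) / Real.log 4 := by
        gcongr <;> first | exact hL4 | positivity

lemma eval_aux (w : ℂ) (hw : ‖w‖ < 1) :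
    testFn w w = ((Real.log (4 / (1 - ‖w‖ ^ 2)) : ℝ) : ℂ) := by
  have h0 : 0 < 1 - ‖w‖ ^ 2 := by nlinarith [norm_nonneg w]
  have hL : 0 < Real.log (4 / (1 - ‖w‖ ^ 2)) := by
    apply Real.log_pos
    rw [lt_div_iff₀ h0]; nlinarith [norm_nonneg w]
  have hc : (1 : ℂ) - w * (starRingEnd ℂ) w = ((1 - ‖w‖ ^ 2 : ℝ) : ℂ) := by
    rw [Complex.mul_conj]
    push_cast
    rw [Complex.normSq_eq_norm_sq]
    simp
  simp only [testFn]
  rw [hc]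
  rw [show ((4:ℂ) / ((1 - ‖w‖ ^ 2 : ℝ) : ℂ)) = (((4 / (1 - ‖w‖ ^ 2) : ℝ)) : ℂ) by
    push_cast; ring]
  rw [← Complex.ofReal_log (by positivity)]
  rw [pow_two, mul_div_assoc, div_self (by exact_mod_cast hL.ne'), mul_one]

/-- Each f_w is holomorphic on 𝔻 with f_w(w) = log(4/(1-|w|²)), the Bloch norms
‖f_w‖_ℬ are uniformly bounded, and f_w → 0 locally uniformly as |w| → 1. -/
theorem test_function_properties :
    (∀ w ∈ unitDisk, DifferentiableOn ℂ (testFn w) unitDisk) ∧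
      (∀ w ∈ unitDisk, testFn w w = ((Real.log (4 / (1 - ‖w‖ ^ 2)) : ℝ) : ℂ)) ∧
      (∃ C : ℝ, ∀ w ∈ unitDisk, IsBlochFn (testFn w) ∧ blochNorm (testFn w) ≤ C) ∧
      (∀ w : ℕ → ℂ, (∀ k, w k ∈ unitDisk) →
        Tendsto (fun k => ‖w k‖) atTop (nhds 1) →
        TendstoLocallyUniformlyOn (fun k => testFn (w k)) 0 atTop unitDisk) :=  by
  have hmem : ∀ w : ℂ, w ∈ unitDisk → ‖w‖ < 1 := by
    intro w hw; simpa [unitDisk] using hw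
  have hdiff : ∀ w ∈ unitDisk, DifferentiableOn ℂ (testFn w) unitDisk := by
    intro w hw z hz
    have hzw : ‖z‖ * ‖w‖ < 1 := by
      nlinarith [norm_nonneg z, norm_nonneg w, hmem w hw, hmem z hz]
    exact ((hasDerivAt_testFn w z hzw).differentiableAt).differentiableWithinAt
  refine ⟨hdiff, ?_, ?_, ?_⟩
  · intro w hw
    exact eval_aux w (hmem w hw)
  · refine ⟨Real.log 4 + (4 + 4 * (Real.log 2 + Real.pi) / Real.log 4), ?_⟩
    intro w hw
    have hw1 := hmem w hw
    have hbdd : ∀ x ∈ (fun z => (1 - ‖z‖ ^ 2) * ‖deriv (testFn w) z‖) '' unitDisk,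
        x ≤ 4 + 4 * (Real.log 2 + Real.pi) / Real.log 4 := by
      rintro x ⟨z, hz, rfl⟩
      exact bound_aux w z hw1 (hmem z hz)
    have hlog4 : 0 < Real.log 4 := Real.log_pos (by norm_num)
    have h0 : 0 < 1 - ‖w‖ ^ 2 := by nlinarith [norm_nonneg w]
    have hL4 : Real.log 4 ≤ Real.log (4 / (1 - ‖w‖ ^ 2)) := by
      apply Real.log_le_log (by norm_num)
      rw [le_div_iff₀ h0]; nlinarith [norm_nonneg w]
    have hL : 0 < Real.log (4 / (1 - ‖w‖ ^ 2)) := lt_of_lt_of_le hlog4 hL4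
    have key0 : ‖testFn w 0‖ ≤ Real.log 4 := by
      have e1 : testFn w 0 = (((Real.log 4 : ℝ)) : ℂ) ^ 2 /
          ((Real.log (4 / (1 - ‖w‖ ^ 2)) : ℝ) : ℂ) := by
        simp only [testFn, zero_mul, sub_zero, div_one]
        rw [show Complex.log 4 = ((Real.log 4 : ℝ) : ℂ) by
          rw [show (4:ℂ) = ((4:ℝ):ℂ) by norm_num,
            ← Complex.ofReal_log (by norm_num : (0:ℝ) ≤ 4)]]
      rw [e1, norm_div, norm_pow]
      simp only [Complex.norm_real, Real.norm_eq_abs]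
      rw [_root_.abs_of_pos hL, _root_.abs_of_pos hlog4]
      rw [div_le_iff₀ hL]
      nlinarith
    have hβ : betaSem (testFn w) ≤ 4 + 4 * (Real.log 2 + Real.pi) / Real.log 4 := by
      apply csSup_le
      · exact Set.Nonempty.image _ ⟨0, by simp [unitDisk]⟩
      · exact fun b hb => hbdd b hb
    refine ⟨⟨hdiff w hw, ⟨_, fun x hx => hbdd x hx⟩⟩, ?_⟩
    unfold blochNorm
    linarith
  · intro w hwmem hlim
    have hwk : ∀ k, ‖w k‖ < 1 := fun k => hmem _ (hwmem k)
    have hopen : IsOpen unitDisk := Metric.isOpen_ball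
    rw [tendstoLocallyUniformlyOn_iff_forall_isCompact hopen]
    intro K hK hKc
    rcases K.eq_empty_or_nonempty with rfl | hKne
    · exact tendstoUniformlyOn_empty
    obtain ⟨z₀, hz₀K, hz₀max⟩ := hKc.exists_isMaxOn hKne continuous_norm.continuousOn
    set r := ‖z₀‖ with hrdef
    have hr1 : r < 1 := hmem _ (hK hz₀K)
    have hr0 : 0 ≤ r := norm_nonneg _
    set M := Real.log (4 / (1 - r)) + Real.pi with hMdef
    have hM0 : 0 ≤ M := by
      have h1 : 0 ≤ Real.log (4 / (1 - r)) := by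
        apply Real.log_nonneg
        rw [le_div_iff₀ (by linarith)]; linarith
      have := Real.pi_pos; rw [hMdef]; linarith
    have hLtend : Tendsto (fun k => Real.log (4 / (1 - ‖w k‖ ^ 2))) atTop atTop := by
      apply Real.tendsto_log_atTop.comp
      have h1 : Tendsto (fun k => 1 - ‖w k‖ ^ 2) atTop (nhdsWithin 0 (Set.Ioi 0)) := by
        rw [tendsto_nhdsWithin_iff]
        constructor
        · have h2 : Tendsto (fun k => 1 - ‖w k‖ ^ 2) atTop (nhds (1 - 1 ^ 2)) :=
            tendsto_const_nhds.sub (hlim.pow 2)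
          simpa using h2
        · filter_upwards with k
          have := hwk k
          have h3 : 0 < 1 - ‖w k‖ ^ 2 := by nlinarith [norm_nonneg (w k)]
          exact h3
      have h2 : Tendsto (fun x : ℝ => 4 / x) (nhdsWithin 0 (Set.Ioi 0)) atTop := by
        have h3 : Tendsto (fun x : ℝ => 4 * x⁻¹) (nhdsWithin 0 (Set.Ioi 0)) atTop :=
          Tendsto.const_mul_atTop (by norm_num) tendsto_inv_nhdsGT_zero
        simpa [div_eq_mul_inv] using h3
      exact h2.comp h1
    rw [Metric.tendstoUniformlyOn_iff]
    intro ε hε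
    filter_upwards [hLtend.eventually_gt_atTop (max (M ^ 2 / ε) 0)] with k hk z hzK
    have hL0 : 0 < Real.log (4 / (1 - ‖w k‖ ^ 2)) :=
      lt_of_le_of_lt (le_max_right _ _) hk
    have hzr : ‖z‖ ≤ r := hz₀max hzK
    have hzw : ‖z‖ * ‖w k‖ < 1 := by
      nlinarith [norm_nonneg z, norm_nonneg (w k), hwk k]
    have hnum : ‖Complex.log (4 / (1 - z * (starRingEnd ℂ) (w k)))‖ ≤ M := by
      refine le_trans (norm_log_le_aux z (w k) hzw) ?_
      have e1 : (0:ℝ) < 1 - ‖z‖ * ‖w k‖ := by linarith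
      have e2 : (0:ℝ) < 1 - r := by linarith
      have hle : 1 - r ≤ 1 - ‖z‖ * ‖w k‖ := by
        nlinarith [norm_nonneg z, norm_nonneg (w k), (hwk k).le]
      have hlog : Real.log (4 / (1 - ‖z‖ * ‖w k‖)) ≤ Real.log (4 / (1 - r)) :=
        Real.log_le_log (div_pos (by norm_num) e1)
          (div_le_div_of_nonneg_left (by norm_num) e2 hle)
      rw [hMdef]
      linarith
    have hval : ‖testFn (w k) z‖ ≤ M ^ 2 / Real.log (4 / (1 - ‖w k‖ ^ 2)) := by
      simp only [testFn, norm_div, norm_pow, Complex.norm_real, Real.norm_eq_abs]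
      rw [_root_.abs_of_pos hL0]
      gcongr <;> try exact hnum
    have hfin : M ^ 2 / Real.log (4 / (1 - ‖w k‖ ^ 2)) < ε := by
      rw [div_lt_iff₀ hL0]
      have h5 : M ^ 2 / ε < Real.log (4 / (1 - ‖w k‖ ^ 2)) :=
        lt_of_le_of_lt (le_max_left _ _) hk
      rw [div_lt_iff₀ hε] at h5
      linarith
    have hd : dist ((0 : ℂ → ℂ) z) (testFn (w k) z) = ‖testFn (w k) z‖ := by simp
    rw [hd]
    exact lt_of_le_of_lt hval hfin
end
end

section
/- Let μ : 𝔻ⁿ → (0,∞) be continuous, ψ : 𝔻ⁿ → ℂ holomorphic, and φ = (φ_1,…,φ_n) a holomorphic self-map of 𝔻ⁿ. If the weighted composition operator W_{ψ,φ} is bounded from the little Bloch space ℬ_{0*}(𝔻ⁿ) into H^∞_μ(𝔻ⁿ), then ϑ_μ(ψ,φ) := sup_{z∈𝔻ⁿ} (1/2)μ(z)|ψ(z)| Σ_{j=1}^n log((1+|φ_j(z)|)/(1-|φ_j(z)|)) ≤ n(1+log 2)·‖W_{ψ,φ}‖. -/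
open Complex Filter

noncomputable section

/-- The unit polydisk 𝔻ⁿ in ℂⁿ. -/
def polyDisk (n : ℕ) : Set (Fin n → ℂ) := {z | ∀ j, ‖z j‖ < 1}

/-- The Bergman metric on 𝔻ⁿ evaluated on (u, ū): H_z(u,ū) = Σ_j |u_j|²/(1-|z_j|²)². -/
def bergmanH {n : ℕ} (z u : Fin n → ℂ) : ℝ := ∑ j, ‖u j‖ ^ 2 / (1 - ‖z j‖ ^ 2) ^ 2

/-- Q_f(z) = sup_{u≠0} |∇f(z)u| / H_z(u,ū)^{1/2}. -/
def QBloch {n : ℕ} (f : (Fin n → ℂ) → ℂ) (z : Fin n → ℂ) : ℝ :=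
  sSup {r : ℝ | ∃ u : Fin n → ℂ, u ≠ 0 ∧ r = ‖fderiv ℂ f z u‖ / Real.sqrt (bergmanH z u)}

/-- The Bloch seminorm β_f = sup_{z ∈ 𝔻ⁿ} Q_f(z). -/
def betaP {n : ℕ} (f : (Fin n → ℂ) → ℂ) : ℝ := sSup (QBloch f '' polyDisk n)

/-- A Bloch function on 𝔻ⁿ: holomorphic with finite Bloch seminorm. -/
def IsBlochP {n : ℕ} (f : (Fin n → ℂ) → ℂ) : Prop :=
  DifferentiableOn ℂ f (polyDisk n) ∧ BddAbove (QBloch f '' polyDisk n)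

/-- The Bloch norm ‖f‖_ℬ = |f(0)| + β_f on 𝔻ⁿ. -/
def blochNormP {n : ℕ} (f : (Fin n → ℂ) → ℂ) : ℝ := ‖f 0‖ + betaP f

/-- The *-little Bloch space: Q_f(z) → 0 as z tends to the distinguished boundary. -/
def IsLittleBlochP {n : ℕ} (f : (Fin n → ℂ) → ℂ) : Prop :=
  IsBlochP f ∧
    ∀ ε > 0, ∃ r < (1 : ℝ), ∀ z ∈ polyDisk n, (∀ j, r < ‖z j‖) → QBloch f z < ε

/-- ϑ_μ(ψ,φ) pointwise quantity: (1/2)μ(z)|ψ(z)| Σ_j log((1+|φ_j(z)|)/(1-|φ_j(z)|)). -/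
def thetaFn {n : ℕ} (μ : (Fin n → ℂ) → ℝ) (ψ : (Fin n → ℂ) → ℂ)
    (φ : (Fin n → ℂ) → Fin n → ℂ) (z : Fin n → ℂ) : ℝ :=
  (1 / 2) * (μ z * (‖ψ z‖ * ∑ j, Real.log ((1 + ‖φ z j‖) / (1 - ‖φ z j‖))))

/-- Values μ(z)|ψ(z)||f(φ(z))| over f in the unit ball of ℬ(𝔻ⁿ) and z ∈ 𝔻ⁿ;
its supremum is the operator norm of W_{ψ,φ} : ℬ(𝔻ⁿ) → H^∞_μ(𝔻ⁿ). -/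
def WSetP {n : ℕ} (μ : (Fin n → ℂ) → ℝ) (ψ : (Fin n → ℂ) → ℂ)
    (φ : (Fin n → ℂ) → Fin n → ℂ) : Set ℝ :=
  {r : ℝ | ∃ f : (Fin n → ℂ) → ℂ, IsBlochP f ∧ blochNormP f ≤ 1 ∧
    ∃ z ∈ polyDisk n, r = μ z * (‖ψ z‖ * ‖f (φ z)‖)}

/-- The analogous set for the little Bloch space ℬ_{0*}(𝔻ⁿ). -/
def WSetP0 {n : ℕ} (μ : (Fin n → ℂ) → ℝ) (ψ : (Fin n → ℂ) → ℂ)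
    (φ : (Fin n → ℂ) → Fin n → ℂ) : Set ℝ :=
  {r : ℝ | ∃ f : (Fin n → ℂ) → ℂ, IsLittleBlochP f ∧ blochNormP f ≤ 1 ∧
    ∃ z ∈ polyDisk n, r = μ z * (‖ψ z‖ * ‖f (φ z)‖)}

/-- Compactness of W_{ψ,φ} : ℬ(𝔻ⁿ) → H^∞_μ(𝔻ⁿ): every sequence in the image of
the unit ball of ℬ(𝔻ⁿ) has a subsequence converging in the norm of H^∞_μ(𝔻ⁿ). -/
def WCompactP {n : ℕ} (μ : (Fin n → ℂ) → ℝ) (ψ : (Fin n → ℂ) → ℂ)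
    (φ : (Fin n → ℂ) → Fin n → ℂ) : Prop :=
  ∀ g : ℕ → (Fin n → ℂ) → ℂ, (∀ k, IsBlochP (g k) ∧ blochNormP (g k) ≤ 1) →
    ∃ σ : ℕ → ℕ, StrictMono σ ∧ ∃ h : (Fin n → ℂ) → ℂ,
      ∀ ε > 0, ∃ N : ℕ, ∀ j ≥ N, ∀ z ∈ polyDisk n,
        μ z * ‖ψ z * g (σ j) (φ z) - h z‖ ≤ ε

namespace ThetaAux

variable {n : ℕ}

lemma log4_pos : (0:ℝ) < Real.log 4 := Real.log_pos (by norm_num)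

/-- The normalizing constant. -/
def cc (n : ℕ) : ℝ := 1 / (n * (2 + Real.log 4))

lemma cc_pos (hn : 0 < n) : 0 < cc n := by
  have : (0:ℝ) < n := by exact_mod_cast hn
  unfold cc
  have := log4_pos
  positivity

/-- The test function. -/
def testF (n : ℕ) (w : Fin n → ℂ) (ζ : Fin n → ℂ) : ℂ :=
  ((cc n : ℝ) : ℂ) * ∑ j, ((Real.log 4 : ℂ) - Complex.log (1 - ζ j * (starRingEnd ℂ) (w j)))

lemma re_pos_aux {a b : ℂ} (ha : ‖a‖ < 1) (hb : ‖b‖ ≤ 1) :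
    0 < (1 - a * (starRingEnd ℂ) b).re := by
  have h1 : ‖a * (starRingEnd ℂ) b‖ < 1 := by
    rw [norm_mul, RCLike.norm_conj]
    nlinarith [norm_nonneg a, norm_nonneg b]
  have h2 : (a * (starRingEnd ℂ) b).re ≤ ‖a * (starRingEnd ℂ) b‖ := by
    exact Complex.re_le_norm _
  simp only [Complex.sub_re, Complex.one_re]
  linarith

lemma norm_one_sub_ge {a b : ℂ} (ha : ‖a‖ < 1) (hb : ‖b‖ ≤ 1) :
    1 - ‖a‖ ≤ ‖1 - a * (starRingEnd ℂ) b‖ := by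
  have h1 : ‖(1:ℂ)‖ - ‖a * (starRingEnd ℂ) b‖ ≤ ‖1 - a * (starRingEnd ℂ) b‖ :=
    norm_sub_norm_le _ _
  have h2 : ‖a * (starRingEnd ℂ) b‖ ≤ ‖a‖ := by
    rw [norm_mul, RCLike.norm_conj]
    nlinarith [norm_nonneg a, norm_nonneg b]
  simp only [norm_one] at h1
  linarith

lemma norm_one_sub_ge' {a b : ℂ} (ha : ‖a‖ ≤ 1) (hb : ‖b‖ < 1) :
    1 - ‖b‖ ≤ ‖1 - a * (starRingEnd ℂ) b‖ := by
  have h1 : ‖(1:ℂ)‖ - ‖a * (starRingEnd ℂ) b‖ ≤ ‖1 - a * (starRingEnd ℂ) b‖ :=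
    norm_sub_norm_le _ _
  have h2 : ‖a * (starRingEnd ℂ) b‖ ≤ ‖b‖ := by
    rw [norm_mul, RCLike.norm_conj]
    nlinarith [norm_nonneg a, norm_nonneg b]
  simp only [norm_one] at h1
  linarith

lemma testF_hasFDerivAt (w : Fin n → ℂ) (hw : w ∈ polyDisk n) {z : Fin n → ℂ}
    (hz : z ∈ polyDisk n) :
    HasFDerivAt (testF n w)
      (((cc n : ℝ) : ℂ) • ∑ j, (((1 - z j * (starRingEnd ℂ) (w j))⁻¹ * (starRingEnd ℂ) (w j)) •
        (ContinuousLinearMap.proj j : (Fin n → ℂ) →L[ℂ] ℂ))) z := by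
  have hterm : ∀ j : Fin n,
      HasFDerivAt (fun ζ : Fin n → ℂ =>
          (Real.log 4 : ℂ) - Complex.log (1 - ζ j * (starRingEnd ℂ) (w j)))
        (((1 - z j * (starRingEnd ℂ) (w j))⁻¹ * (starRingEnd ℂ) (w j)) •
          (ContinuousLinearMap.proj j : (Fin n → ℂ) →L[ℂ] ℂ)) z := by
    intro j
    have ha : (1 - z j * (starRingEnd ℂ) (w j)) ∈ Complex.slitPlane :=
      Or.inl (re_pos_aux (hz j) (le_of_lt (hw j)))
    have h1 : HasDerivAt (fun s : ℂ => 1 - s * (starRingEnd ℂ) (w j))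
        (-((starRingEnd ℂ) (w j))) (z j) := by
      simpa using ((hasDerivAt_id (z j)).mul_const ((starRingEnd ℂ) (w j))).const_sub 1
    have h2 : HasDerivAt (fun s : ℂ =>
        (Real.log 4 : ℂ) - Complex.log (1 - s * (starRingEnd ℂ) (w j)))
        ((1 - z j * (starRingEnd ℂ) (w j))⁻¹ * (starRingEnd ℂ) (w j)) (z j) := by
      have h3 := ((Complex.hasDerivAt_log ha).comp (z j) h1).const_sub (Real.log 4 : ℂ)
      refine h3.congr_deriv ?_
      ring
    have hproj : HasFDerivAt (fun ζ : Fin n → ℂ => ζ j)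
        (ContinuousLinearMap.proj j : (Fin n → ℂ) →L[ℂ] ℂ) z :=
      (ContinuousLinearMap.proj (R := ℂ) (φ := fun _ : Fin n => ℂ) j).hasFDerivAt
    have h5 := h2.comp_hasFDerivAt z hproj
    exact h5
  have hsum := HasFDerivAt.fun_sum (fun j (_ : j ∈ Finset.univ) => hterm j)
  exact hsum.const_mul _

lemma bergman_term_le {z u : Fin n → ℂ} (hz : z ∈ polyDisk n) (j : Fin n) :
    (‖u j‖ / (1 - ‖z j‖ ^ 2)) ^ 2 ≤ bergmanH z u := by
  have : (‖u j‖ / (1 - ‖z j‖ ^ 2)) ^ 2 = ‖u j‖ ^ 2 / (1 - ‖z j‖ ^ 2) ^ 2 := div_pow _ _ _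
  rw [this, bergmanH]
  exact Finset.single_le_sum (f := fun j => ‖u j‖ ^ 2 / (1 - ‖z j‖ ^ 2) ^ 2)
    (fun i _ => by positivity) (Finset.mem_univ j)

lemma bergman_pos {z u : Fin n → ℂ} (hz : z ∈ polyDisk n) (hu : u ≠ 0) :
    0 < bergmanH z u := by
  obtain ⟨j, hj⟩ : ∃ j, u j ≠ 0 := by
    by_contra h
    push_neg at h
    exact hu (funext h)
  have hzj : ‖z j‖ < 1 := hz j
  have h1 : 0 < 1 - ‖z j‖ ^ 2 := by nlinarith [norm_nonneg (z j)]
  have h2 : 0 < ‖u j‖ := norm_pos_iff.mpr hj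
  have h3 : (0:ℝ) < ‖u j‖ / (1 - ‖z j‖ ^ 2) := by positivity
  calc (0:ℝ) < (‖u j‖ / (1 - ‖z j‖ ^ 2)) ^ 2 := by positivity
    _ ≤ bergmanH z u := bergman_term_le hz j

lemma sqrt_bergman_ge {z u : Fin n → ℂ} (hz : z ∈ polyDisk n) (j : Fin n) :
    ‖u j‖ / (1 - ‖z j‖ ^ 2) ≤ Real.sqrt (bergmanH z u) := by
  have hzj : ‖z j‖ < 1 := hz j
  have h1 : 0 < 1 - ‖z j‖ ^ 2 := by nlinarith [norm_nonneg (z j)]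
  have h2 : (0:ℝ) ≤ ‖u j‖ / (1 - ‖z j‖ ^ 2) := by positivity
  have := Real.sqrt_le_sqrt (bergman_term_le hz (u := u) j)
  rwa [Real.sqrt_sq h2] at this

lemma deriv_apply_le (w : Fin n → ℂ) (hw : w ∈ polyDisk n) {z : Fin n → ℂ}
    (hz : z ∈ polyDisk n) (u : Fin n → ℂ) :
    ‖fderiv ℂ (testF n w) z u‖ ≤
      cc n * ∑ j, ‖w j‖ / ‖1 - z j * (starRingEnd ℂ) (w j)‖ * ‖u j‖ := by
  rw [(testF_hasFDerivAt w hw hz).fderiv]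
  simp only [ContinuousLinearMap.smul_apply, ContinuousLinearMap.sum_apply,
    ContinuousLinearMap.proj_apply, smul_eq_mul]
  rw [norm_mul]
  have h1 : ‖((cc n : ℝ) : ℂ)‖ = cc n := by
    rw [Complex.norm_real, Real.norm_eq_abs, _root_.abs_of_nonneg]
    unfold cc
    have := log4_pos
    positivity
  rw [h1]
  apply mul_le_mul_of_nonneg_left _ (by
    unfold cc; have := log4_pos; positivity)
  refine le_trans (norm_sum_le _ _) (Finset.sum_le_sum fun j _ => ?_)
  exact le_of_eq (by rw [norm_mul, norm_mul, norm_inv, RCLike.norm_conj]; ring)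

lemma testF_isBloch (w : Fin n → ℂ) (hw : w ∈ polyDisk n) (hn : 0 < n) :
    ∀ z ∈ polyDisk n, QBloch (testF n w) z ≤ 2 * cc n * Real.sqrt n := by
  intro z hz
  apply csSup_le
  · refine ⟨‖fderiv ℂ (testF n w) z (fun _ => 1)‖ / Real.sqrt (bergmanH z (fun _ => 1)),
      (fun _ => 1), ?_, rfl⟩
    intro h
    have := congrFun h ⟨0, hn⟩
    simp at this
  · rintro r ⟨u, hu, rfl⟩
    have hH := bergman_pos hz hu
    have hsH : 0 < Real.sqrt (bergmanH z u) := Real.sqrt_pos.mpr hH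
    rw [div_le_iff₀ hsH]
    calc ‖fderiv ℂ (testF n w) z u‖
        ≤ cc n * ∑ j, ‖w j‖ / ‖1 - z j * (starRingEnd ℂ) (w j)‖ * ‖u j‖ :=
          deriv_apply_le w hw hz u
      _ ≤ cc n * ∑ j, 2 * (‖u j‖ / (1 - ‖z j‖ ^ 2)) := by
          apply mul_le_mul_of_nonneg_left _ (le_of_lt (cc_pos hn))
          refine Finset.sum_le_sum fun j _ => ?_
          have hzj : ‖z j‖ < 1 := hz j
          have hwj : ‖w j‖ < 1 := hw j
          have hden : 1 - ‖z j‖ ≤ ‖1 - z j * (starRingEnd ℂ) (w j)‖ :=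
            norm_one_sub_ge hzj (le_of_lt hwj)
          have hdpos : 0 < ‖1 - z j * (starRingEnd ℂ) (w j)‖ := by
            have : 0 < 1 - ‖z j‖ := by linarith
            linarith
          have h2 : 0 < 1 - ‖z j‖ ^ 2 := by nlinarith [norm_nonneg (z j)]
          have key : ‖w j‖ / ‖1 - z j * (starRingEnd ℂ) (w j)‖ ≤ 2 / (1 - ‖z j‖ ^ 2) := by
            rw [div_le_div_iff₀ hdpos h2]
            nlinarith [norm_nonneg (z j), norm_nonneg (w j),
              mul_le_mul_of_nonneg_left hden (norm_nonneg (w j))]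
          calc ‖w j‖ / ‖1 - z j * (starRingEnd ℂ) (w j)‖ * ‖u j‖
              ≤ 2 / (1 - ‖z j‖ ^ 2) * ‖u j‖ :=
                mul_le_mul_of_nonneg_right key (norm_nonneg _)
            _ = 2 * (‖u j‖ / (1 - ‖z j‖ ^ 2)) := by ring
      _ = 2 * cc n * ∑ j, ‖u j‖ / (1 - ‖z j‖ ^ 2) := by
          rw [Finset.mul_sum, Finset.mul_sum]
          exact Finset.sum_congr rfl fun j _ => by ring
      _ ≤ 2 * cc n * (Real.sqrt n * Real.sqrt (bergmanH z u)) := by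
          apply mul_le_mul_of_nonneg_left _ (by have := cc_pos hn; linarith)
          have hsq : (∑ j, ‖u j‖ / (1 - ‖z j‖ ^ 2)) ^ 2 ≤
              (n : ℝ) * ∑ j, (‖u j‖ / (1 - ‖z j‖ ^ 2)) ^ 2 := by
            have := sq_sum_le_card_mul_sum_sq
              (s := (Finset.univ : Finset (Fin n))) (f := fun j => ‖u j‖ / (1 - ‖z j‖ ^ 2))
            simpa using this
          have hsum_eq : ∑ j, (‖u j‖ / (1 - ‖z j‖ ^ 2)) ^ 2 = bergmanH z u := by
            unfold bergmanH
            exact Finset.sum_congr rfl fun j _ => div_pow _ _ _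
          rw [hsum_eq] at hsq
          have hnn : (0:ℝ) ≤ ∑ j, ‖u j‖ / (1 - ‖z j‖ ^ 2) := by
            apply Finset.sum_nonneg
            intro j _
            have hzj : ‖z j‖ < 1 := hz j
            have : 0 < 1 - ‖z j‖ ^ 2 := by nlinarith [norm_nonneg (z j)]
            positivity
          calc ∑ j, ‖u j‖ / (1 - ‖z j‖ ^ 2)
              = Real.sqrt ((∑ j, ‖u j‖ / (1 - ‖z j‖ ^ 2)) ^ 2) := (Real.sqrt_sq hnn).symm
            _ ≤ Real.sqrt ((n : ℝ) * bergmanH z u) := Real.sqrt_le_sqrt hsq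
            _ = Real.sqrt n * Real.sqrt (bergmanH z u) := Real.sqrt_mul (by positivity) _
      _ = 2 * cc n * Real.sqrt n * Real.sqrt (bergmanH z u) := by ring


lemma cc_nonneg (n : ℕ) : 0 ≤ cc n := by
  unfold cc
  have := log4_pos
  positivity

lemma testF_norm_zero (w : Fin n → ℂ) : ‖testF n w 0‖ = cc n * (n * Real.log 4) := by
  have h : testF n w 0 = ((cc n * (n * Real.log 4) : ℝ) : ℂ) := by
    unfold testF
    simp only [Pi.zero_apply, zero_mul, sub_zero, Complex.log_one]
    rw [Finset.sum_const, Finset.card_univ, Fintype.card_fin]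
    push_cast
    ring
  rw [h, Complex.norm_real, Real.norm_eq_abs, _root_.abs_of_nonneg]
  have := cc_nonneg n
  have := log4_pos
  positivity

lemma zero_mem_polyDisk : (0 : Fin n → ℂ) ∈ polyDisk n := by
  intro j; simp [polyDisk]

lemma sqrt_n_le (n : ℕ) : Real.sqrt n ≤ n := by
  have h : (n:ℝ) ≤ (n:ℝ)^2 := by
    have := Nat.le_self_pow (n := 2) (by norm_num) n
    exact_mod_cast this
  calc Real.sqrt n ≤ Real.sqrt ((n:ℝ)^2) := Real.sqrt_le_sqrt h
    _ = n := Real.sqrt_sq (Nat.cast_nonneg n)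

lemma betaP_testF_le (w : Fin n → ℂ) (hw : w ∈ polyDisk n) (hn : 0 < n) :
    betaP (testF n w) ≤ 2 * cc n * Real.sqrt n := by
  apply csSup_le
  · exact ⟨QBloch (testF n w) 0, 0, zero_mem_polyDisk, rfl⟩
  · rintro r ⟨z, hz, rfl⟩
    exact testF_isBloch w hw hn z hz

lemma bddAbove_QBloch_testF (w : Fin n → ℂ) (hw : w ∈ polyDisk n) (hn : 0 < n) :
    BddAbove (QBloch (testF n w) '' polyDisk n) := by
  refine ⟨2 * cc n * Real.sqrt n, ?_⟩
  rintro r ⟨z, hz, rfl⟩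
  exact testF_isBloch w hw hn z hz

lemma blochNormP_testF_le (w : Fin n → ℂ) (hw : w ∈ polyDisk n) (hn : 0 < n) :
    blochNormP (testF n w) ≤ 1 := by
  have hnn : (0:ℝ) < n := by exact_mod_cast hn
  unfold blochNormP
  rw [testF_norm_zero]
  have h1 : betaP (testF n w) ≤ 2 * cc n * Real.sqrt n := betaP_testF_le w hw hn
  have h2 : 2 * cc n * Real.sqrt n ≤ 2 * cc n * n := by
    apply mul_le_mul_of_nonneg_left (sqrt_n_le n)
    have := cc_nonneg n
    linarith
  have h3 : cc n * (n * Real.log 4) + 2 * cc n * n = 1 := by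
    unfold cc
    have := log4_pos
    field_simp
    ring
  linarith

lemma littleBloch_testF (w : Fin n → ℂ) (hw : w ∈ polyDisk n) (hn : 0 < n) :
    IsLittleBlochP (testF n w) := by
  constructor
  · constructor
    · intro z hz
      exact (testF_hasFDerivAt w hw hz).differentiableAt.differentiableWithinAt
    · exact bddAbove_QBloch_testF w hw hn
  · intro eps heps
    set S : ℝ := ∑ j, 1 / (1 - ‖w j‖) with hS
    have hSpos : 0 < S := by
      apply Finset.sum_pos
      · intro j _
        have : ‖w j‖ < 1 := hw j
        have : 0 < 1 - ‖w j‖ := by linarith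
        positivity
      · exact ⟨⟨0, hn⟩, Finset.mem_univ _⟩
    set t : ℝ := min (1/2) (eps / (2 * (cc n * S + 1))) with ht
    have hcS : 0 < cc n * S + 1 := by
      have := cc_nonneg n
      nlinarith
    have htpos : 0 < t := by
      apply lt_min (by norm_num)
      positivity
    refine ⟨1 - t, by linarith, ?_⟩
    intro z hz hrz
    have hrange : ∀ j, 1 - ‖z j‖ ^ 2 < 2 * t := by
      intro j
      have h1 : 1 - t < ‖z j‖ := hrz j
      have h2 : ‖z j‖ < 1 := hz j
      have ht2 : t ≤ 1/2 := min_le_left _ _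
      nlinarith
    have hbound : QBloch (testF n w) z ≤ cc n * S * (2 * t) := by
      apply csSup_le
      · refine ⟨‖fderiv ℂ (testF n w) z (fun _ => 1)‖ / Real.sqrt (bergmanH z (fun _ => 1)),
          (fun _ => 1), ?_, rfl⟩
        intro h
        have := congrFun h ⟨0, hn⟩
        simp at this
      · rintro r ⟨u, hu, rfl⟩
        have hH := bergman_pos hz hu
        have hsH : 0 < Real.sqrt (bergmanH z u) := Real.sqrt_pos.mpr hH
        rw [div_le_iff₀ hsH]
        calc ‖fderiv ℂ (testF n w) z u‖
            ≤ cc n * ∑ j, ‖w j‖ / ‖1 - z j * (starRingEnd ℂ) (w j)‖ * ‖u j‖ :=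
              deriv_apply_le w hw hz u
          _ ≤ cc n * ∑ j, (1 / (1 - ‖w j‖)) * (2 * t) * Real.sqrt (bergmanH z u) := by
              apply mul_le_mul_of_nonneg_left _ (cc_nonneg n)
              refine Finset.sum_le_sum fun j _ => ?_
              have hwj : ‖w j‖ < 1 := hw j
              have hzj : ‖z j‖ < 1 := hz j
              have hden : 1 - ‖w j‖ ≤ ‖1 - z j * (starRingEnd ℂ) (w j)‖ :=
                norm_one_sub_ge' (le_of_lt hzj) hwj
              have hwpos : 0 < 1 - ‖w j‖ := by linarith
              have hdpos : 0 < ‖1 - z j * (starRingEnd ℂ) (w j)‖ := by linarith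
              have h2pos : 0 < 1 - ‖z j‖ ^ 2 := by nlinarith [norm_nonneg (z j)]
              have step1 : ‖w j‖ / ‖1 - z j * (starRingEnd ℂ) (w j)‖ ≤ 1 / (1 - ‖w j‖) := by
                rw [div_le_div_iff₀ hdpos hwpos]
                nlinarith [norm_nonneg (w j)]
              have step2 : ‖u j‖ ≤ (1 - ‖z j‖ ^ 2) * Real.sqrt (bergmanH z u) := by
                have := sqrt_bergman_ge hz (u := u) j
                rw [div_le_iff₀ h2pos] at this
                linarith [this]
              have step3 : ‖u j‖ ≤ 2 * t * Real.sqrt (bergmanH z u) := by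
                have h4 := hrange j
                nlinarith [Real.sqrt_nonneg (bergmanH z u)]
              calc ‖w j‖ / ‖1 - z j * (starRingEnd ℂ) (w j)‖ * ‖u j‖
                  ≤ (1 / (1 - ‖w j‖)) * ‖u j‖ :=
                    mul_le_mul_of_nonneg_right step1 (norm_nonneg _)
                _ ≤ (1 / (1 - ‖w j‖)) * (2 * t * Real.sqrt (bergmanH z u)) := by
                    apply mul_le_mul_of_nonneg_left step3
                    positivity
                _ = (1 / (1 - ‖w j‖)) * (2 * t) * Real.sqrt (bergmanH z u) := by ring
          _ = cc n * S * (2 * t) * Real.sqrt (bergmanH z u) := by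
              rw [← Finset.sum_mul, ← Finset.sum_mul, hS]
              ring
    have hfin : cc n * S * (2 * t) < eps := by
      have ht3 : t ≤ eps / (2 * (cc n * S + 1)) := min_le_right _ _
      have hcS0 : 0 ≤ cc n * S := by
        have := cc_nonneg n
        positivity
      have : cc n * S * (2 * t) ≤ cc n * S * (2 * (eps / (2 * (cc n * S + 1)))) := by
        apply mul_le_mul_of_nonneg_left (by linarith) hcS0
      have heq : cc n * S * (2 * (eps / (2 * (cc n * S + 1)))) =
          eps * (cc n * S / (cc n * S + 1)) := by
        field_simp
      have hlt : cc n * S / (cc n * S + 1) < 1 := by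
        rw [div_lt_one hcS]
        linarith
      nlinarith
    linarith [hbound]

lemma log_ratio_nonneg {a : ℝ} (ha : 0 ≤ a) (ha1 : a < 1) :
    0 ≤ Real.log ((1 + a) / (1 - a)) := by
  apply Real.log_nonneg
  rw [le_div_iff₀ (by linarith)]
  linarith

lemma log_ratio_le {a : ℝ} (ha : 0 ≤ a) (ha1 : a < 1) :
    Real.log ((1 + a) / (1 - a)) ≤ Real.log 4 - Real.log (1 - a ^ 2) := by
  have h1 : 0 < 1 - a := by linarith
  have h2 : 0 < 1 + a := by linarith
  have h3 : 0 < 1 - a ^ 2 := by nlinarith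
  have key : Real.log ((1 + a) / (1 - a)) ≤ Real.log (4 / (1 - a ^ 2)) := by
    apply Real.log_le_log (by positivity)
    rw [div_le_div_iff₀ h1 h3]
    nlinarith
  rw [Real.log_div (by norm_num) (ne_of_gt h3)] at key
  exact key

lemma testF_re_at_w (w : Fin n → ℂ) (hw : w ∈ polyDisk n) :
    (testF n w w).re = cc n * ∑ j, (Real.log 4 - Real.log (1 - ‖w j‖ ^ 2)) := by
  unfold testF
  rw [Complex.re_ofReal_mul]
  congr 1
  rw [Complex.re_sum]
  refine Finset.sum_congr rfl fun j _ => ?_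
  have hwj : ‖w j‖ < 1 := hw j
  have h3 : (0:ℝ) < 1 - ‖w j‖ ^ 2 := by nlinarith [norm_nonneg (w j)]
  have hmc : w j * (starRingEnd ℂ) (w j) = ((‖w j‖ ^ 2 : ℝ) : ℂ) := by
    rw [Complex.mul_conj]
    simp [Complex.normSq_eq_norm_sq]
  have h4 : (1 : ℂ) - w j * (starRingEnd ℂ) (w j) = (((1 - ‖w j‖ ^ 2 : ℝ)) : ℂ) := by
    rw [hmc]; push_cast; ring
  rw [Complex.sub_re, h4, Complex.log_ofReal_re, Complex.ofReal_re]

lemma testF_lower (w : Fin n → ℂ) (hw : w ∈ polyDisk n) :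
    cc n * ∑ j, Real.log ((1 + ‖w j‖) / (1 - ‖w j‖)) ≤ ‖testF n w w‖ := by
  have h1 : cc n * ∑ j, Real.log ((1 + ‖w j‖) / (1 - ‖w j‖)) ≤ (testF n w w).re := by
    rw [testF_re_at_w w hw]
    apply mul_le_mul_of_nonneg_left _ (cc_nonneg n)
    refine Finset.sum_le_sum fun j _ => ?_
    exact log_ratio_le (norm_nonneg _) (hw j)
  have h2 : (testF n w w).re ≤ ‖testF n w w‖ := by
    exact Complex.re_le_norm _
  linarith

lemma half_eq (hn : 0 < n) : (n : ℝ) * (1 + Real.log 2) * cc n = 1 / 2 := by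
  have hnn : (0:ℝ) < n := by exact_mod_cast hn
  have h4 : Real.log 4 = 2 * Real.log 2 := by
    rw [show (4:ℝ) = 2 ^ 2 by norm_num, Real.log_pow]
    push_cast; ring
  unfold cc
  rw [h4]
  have hl2 : 0 < Real.log 2 := Real.log_pos (by norm_num)
  field_simp

end ThetaAux

/-- If W_{ψ,φ} : ℬ_{0*}(𝔻ⁿ) → H^∞_μ(𝔻ⁿ) is bounded, then
ϑ_μ(ψ,φ) ≤ n(1+log 2)‖W_{ψ,φ}‖. -/
theorem theta_le_opNorm {n : ℕ} (hn : 0 < n)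
    (μ : (Fin n → ℂ) → ℝ) (ψ : (Fin n → ℂ) → ℂ) (φ : (Fin n → ℂ) → Fin n → ℂ)
    (hμc : ContinuousOn μ (polyDisk n)) (hμp : ∀ z ∈ polyDisk n, 0 < μ z)
    (hψ : DifferentiableOn ℂ ψ (polyDisk n))
    (hφ : DifferentiableOn ℂ φ (polyDisk n)) (hφs : ∀ z ∈ polyDisk n, φ z ∈ polyDisk n)
    (hbdd : BddAbove (WSetP0 μ ψ φ)) :
    ∀ z ∈ polyDisk n, thetaFn μ ψ φ z ≤ n * (1 + Real.log 2) * sSup (WSetP0 μ ψ φ) := by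
  intro z hz
  set w := φ z with hwdef
  have hw : w ∈ polyDisk n := hφs z hz
  have hmem : μ z * (‖ψ z‖ * ‖ThetaAux.testF n w (φ z)‖) ∈ WSetP0 μ ψ φ :=
    ⟨ThetaAux.testF n w, ThetaAux.littleBloch_testF w hw hn,
      ThetaAux.blochNormP_testF_le w hw hn, z, hz, rfl⟩
  have h1 : μ z * (‖ψ z‖ * ‖ThetaAux.testF n w (φ z)‖) ≤ sSup (WSetP0 μ ψ φ) :=
    le_csSup hbdd hmem
  have hcoef : (0:ℝ) ≤ (n : ℝ) * (1 + Real.log 2) := by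
    have hl2 : 0 < Real.log 2 := Real.log_pos (by norm_num)
    have : (0:ℝ) ≤ n := Nat.cast_nonneg n
    nlinarith
  have h2 : thetaFn μ ψ φ z ≤
      (n : ℝ) * (1 + Real.log 2) * (μ z * (‖ψ z‖ * ‖ThetaAux.testF n w (φ z)‖)) := by
    unfold thetaFn
    rw [← hwdef]
    have hlow := ThetaAux.testF_lower w hw
    have hμz : 0 ≤ μ z := le_of_lt (hμp z hz)
    have hψz : 0 ≤ ‖ψ z‖ := norm_nonneg _
    have hhalf := ThetaAux.half_eq (n := n) hn
    calc (1/2 : ℝ) * (μ z * (‖ψ z‖ * ∑ j, Real.log ((1 + ‖w j‖) / (1 - ‖w j‖))))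
        = (n : ℝ) * (1 + Real.log 2) *
          (μ z * (‖ψ z‖ * (ThetaAux.cc n * ∑ j, Real.log ((1 + ‖w j‖) / (1 - ‖w j‖))))) := by
          rw [← hhalf]; ring
      _ ≤ (n : ℝ) * (1 + Real.log 2) * (μ z * (‖ψ z‖ * ‖ThetaAux.testF n w w‖)) := by
          apply mul_le_mul_of_nonneg_left _ hcoef
          apply mul_le_mul_of_nonneg_left _ hμz
          exact mul_le_mul_of_nonneg_left hlow hψz
  calc thetaFn μ ψ φ z
      ≤ (n : ℝ) * (1 + Real.log 2) * (μ z * (‖ψ z‖ * ‖ThetaAux.testF n w (φ z)‖)) := h2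
    _ ≤ (n : ℝ) * (1 + Real.log 2) * sSup (WSetP0 μ ψ φ) :=
        mul_le_mul_of_nonneg_left h1 hcoef
end
end

section
/- Let μ be a continuous positive weight on 𝔻ⁿ, ψ holomorphic on 𝔻ⁿ, and φ = (φ_1,…,φ_n) a holomorphic self-map of 𝔻ⁿ. Then W_{ψ,φ} : ℬ(𝔻ⁿ) → H^∞_μ(𝔻ⁿ) is bounded if and only if ψ ∈ H^∞_μ(𝔻ⁿ) and ϑ_μ(ψ,φ) = sup_{z∈𝔻ⁿ} (1/2)μ(z)|ψ(z)| Σ_{j=1}^n log((1+|φ_j(z)|)/(1-|φ_j(z)|)) is finite. -/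
open Complex Filter

noncomputable section

namespace Aux
variable {n : ℕ}

lemma polyDisk_isOpen (n : ℕ) : IsOpen (polyDisk n) := by
  have : polyDisk n = ⋂ j, (fun z : Fin n → ℂ => z j) ⁻¹' Metric.ball 0 1 := by
    ext z; simp [polyDisk, mem_ball_zero_iff]
  rw [this]
  exact isOpen_iInter_of_finite fun j => (Metric.isOpen_ball).preimage (continuous_apply j)

lemma zero_mem_polyDisk : (0 : Fin n → ℂ) ∈ polyDisk n := by
  intro j; simp

lemma one_sub_sq_pos {z : Fin n → ℂ} (hz : z ∈ polyDisk n) (j : Fin n) :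
    0 < 1 - ‖z j‖ ^ 2 := by
  have := hz j
  nlinarith [norm_nonneg (z j)]

lemma bergmanH_nonneg (z u : Fin n → ℂ) : 0 ≤ bergmanH z u :=
  Finset.sum_nonneg fun j _ => by positivity

lemma norm_le_sqrt_bergman {z : Fin n → ℂ} (hz : z ∈ polyDisk n) (u : Fin n → ℂ) :
    ‖u‖ ≤ Real.sqrt (bergmanH z u) := by
  have hsum : ∀ j, ‖u j‖ ^ 2 ≤ bergmanH z u := by
    intro j
    have h1 : 0 < 1 - ‖z j‖ ^ 2 := one_sub_sq_pos hz j
    have h2 : (1 - ‖z j‖ ^ 2) ^ 2 ≤ 1 := by nlinarith [norm_nonneg (z j), sq_nonneg (‖z j‖)]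
    have : ‖u j‖ ^ 2 ≤ ‖u j‖ ^ 2 / (1 - ‖z j‖ ^ 2) ^ 2 := by
      rw [le_div_iff₀ (by positivity)]
      nlinarith [sq_nonneg (‖u j‖)]
    refine this.trans ?_
    exact Finset.single_le_sum (f := fun j => ‖u j‖ ^ 2 / (1 - ‖z j‖ ^ 2) ^ 2)
      (fun i _ => by positivity) (Finset.mem_univ j)
  rw [show (u : Fin n → ℂ) = u from rfl]
  refine pi_norm_le_iff_of_nonneg (Real.sqrt_nonneg _) |>.mpr fun j => ?_
  have := hsum j
  have h := Real.sqrt_le_sqrt this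
  rwa [Real.sqrt_sq (norm_nonneg _)] at h


lemma QSet_bddAbove {f : (Fin n → ℂ) → ℂ} {z : Fin n → ℂ} (hz : z ∈ polyDisk n) :
    BddAbove {r : ℝ | ∃ u : Fin n → ℂ, u ≠ 0 ∧
      r = ‖fderiv ℂ f z u‖ / Real.sqrt (bergmanH z u)} := by
  refine ⟨‖fderiv ℂ f z‖, ?_⟩
  rintro r ⟨v, hv, rfl⟩
  have hv' : 0 < ‖v‖ := norm_pos_iff.mpr hv
  have hs : 0 < Real.sqrt (bergmanH z v) := lt_of_lt_of_le hv' (norm_le_sqrt_bergman hz v)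
  rw [div_le_iff₀ hs]
  calc ‖fderiv ℂ f z v‖ ≤ ‖fderiv ℂ f z‖ * ‖v‖ := (fderiv ℂ f z).le_opNorm v
    _ ≤ ‖fderiv ℂ f z‖ * Real.sqrt (bergmanH z v) := by
        exact mul_le_mul_of_nonneg_left (norm_le_sqrt_bergman hz v) (norm_nonneg _)

lemma ratio_le_QBloch {f : (Fin n → ℂ) → ℂ} {z : Fin n → ℂ} (hz : z ∈ polyDisk n)
    {u : Fin n → ℂ} (hu : u ≠ 0) :
    ‖fderiv ℂ f z u‖ / Real.sqrt (bergmanH z u) ≤ QBloch f z :=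
  le_csSup (QSet_bddAbove hz) ⟨u, hu, rfl⟩

lemma QBloch_nonneg (hn : 0 < n) {f : (Fin n → ℂ) → ℂ} {z : Fin n → ℂ}
    (hz : z ∈ polyDisk n) : 0 ≤ QBloch f z := by
  have hu : (fun _ : Fin n => (1 : ℂ)) ≠ 0 := by
    intro h
    have := congrFun h ⟨0, hn⟩
    simp at this
  refine le_trans ?_ (ratio_le_QBloch hz hu)
  positivity

lemma norm_fderiv_apply_le (hn : 0 < n) {f : (Fin n → ℂ) → ℂ} {z : Fin n → ℂ}
    (hz : z ∈ polyDisk n) (u : Fin n → ℂ) :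
    ‖fderiv ℂ f z u‖ ≤ QBloch f z * Real.sqrt (bergmanH z u) := by
  rcases eq_or_ne u 0 with rfl | hu
  · simp [mul_nonneg (QBloch_nonneg hn hz) (Real.sqrt_nonneg _)]
  · have hv' : 0 < ‖u‖ := norm_pos_iff.mpr hu
    have hs : 0 < Real.sqrt (bergmanH z u) := lt_of_lt_of_le hv' (norm_le_sqrt_bergman hz u)
    have := ratio_le_QBloch (f := f) hz hu
    calc ‖fderiv ℂ f z u‖ = ‖fderiv ℂ f z u‖ / Real.sqrt (bergmanH z u) *
          Real.sqrt (bergmanH z u) := by field_simp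
      _ ≤ QBloch f z * Real.sqrt (bergmanH z u) :=
          mul_le_mul_of_nonneg_right this hs.le

lemma sqrt_bergman_le {z : Fin n → ℂ} (hz : z ∈ polyDisk n) (u : Fin n → ℂ) :
    Real.sqrt (bergmanH z u) ≤ ∑ j, ‖u j‖ / (1 - ‖z j‖ ^ 2) := by
  have h1 : ∀ j : Fin n, 0 < 1 - ‖z j‖ ^ 2 := by
    intro j; nlinarith [hz j, norm_nonneg (z j)]
  have heq : bergmanH z u = ∑ j, (‖u j‖ / (1 - ‖z j‖ ^ 2)) ^ 2 := by
    unfold bergmanH; congr 1; ext j; rw [div_pow]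
  rw [heq]
  have h2 : ∑ j, (‖u j‖ / (1 - ‖z j‖ ^ 2)) ^ 2 ≤ (∑ j, ‖u j‖ / (1 - ‖z j‖ ^ 2)) ^ 2 :=
    Finset.sum_sq_le_sq_sum_of_nonneg fun j _ => div_nonneg (norm_nonneg _) (h1 j).le
  have := Real.sqrt_le_sqrt h2
  rwa [Real.sqrt_sq (Finset.sum_nonneg fun j _ => div_nonneg (norm_nonneg _) (h1 j).le)] at this

lemma sum_le_sqrt_mul_sqrt_bergman {z : Fin n → ℂ} (hz : z ∈ polyDisk n) (u : Fin n → ℂ) :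
    ∑ j, ‖u j‖ / (1 - ‖z j‖ ^ 2) ≤ Real.sqrt n * Real.sqrt (bergmanH z u) := by
  have h1 : ∀ j : Fin n, 0 < 1 - ‖z j‖ ^ 2 := by
    intro j; nlinarith [hz j, norm_nonneg (z j)]
  have heq : bergmanH z u = ∑ j, (‖u j‖ / (1 - ‖z j‖ ^ 2)) ^ 2 := by
    unfold bergmanH; congr 1; ext j; rw [div_pow]
  have h2 : (∑ j, ‖u j‖ / (1 - ‖z j‖ ^ 2)) ^ 2 ≤ (n : ℝ) * ∑ j, (‖u j‖ / (1 - ‖z j‖ ^ 2)) ^ 2 := by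
    have := sq_sum_le_card_mul_sum_sq (s := (Finset.univ : Finset (Fin n)))
      (f := fun j => ‖u j‖ / (1 - ‖z j‖ ^ 2))
    simpa using this
  have h3 := Real.sqrt_le_sqrt h2
  rw [Real.sqrt_sq (Finset.sum_nonneg fun j _ => div_nonneg (norm_nonneg _) (h1 j).le)] at h3
  rw [heq]
  refine h3.trans ?_
  rw [Real.sqrt_mul (by positivity)]


lemma smul_mem_polyDisk {w : Fin n → ℂ} (hw : w ∈ polyDisk n) {t : ℝ}
    (ht0 : 0 ≤ t) (ht1 : t ≤ 1) : t • w ∈ polyDisk n := by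
  intro j
  have : ‖(t • w) j‖ = t * ‖w j‖ := by
    rw [Pi.smul_apply, norm_smul, Real.norm_eq_abs, _root_.abs_of_nonneg ht0]
  rw [this]
  calc t * ‖w j‖ ≤ 1 * ‖w j‖ := mul_le_mul_of_nonneg_right ht1 (norm_nonneg _)
    _ = ‖w j‖ := one_mul _
    _ < 1 := hw j

/-- Growth estimate for Bloch functions. -/
lemma growth (hn : 0 < n) {f : (Fin n → ℂ) → ℂ} (hf : DifferentiableOn ℂ f (polyDisk n))
    {β : ℝ} (hβ : ∀ z ∈ polyDisk n, QBloch f z ≤ β)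
    {w : Fin n → ℂ} (hw : w ∈ polyDisk n) :
    ‖f w - f 0‖ ≤ β * ∑ j, (1 / 2) * Real.log ((1 + ‖w j‖) / (1 - ‖w j‖)) := by
  have hβ0 : 0 ≤ β := le_trans (QBloch_nonneg hn hw) (hβ w hw)
  have ha : ∀ j : Fin n, ‖w j‖ < 1 := hw
  set a : Fin n → ℝ := fun j => ‖w j‖ with ha_def
  have ha0 : ∀ j, 0 ≤ a j := fun j => norm_nonneg _
  -- the curve
  set g : ℝ → ℂ := fun t => f (t • w) - f 0 with hg_def
  set g' : ℝ → ℂ := fun t => fderiv ℂ f (t • w) w with hg'_def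
  set B : ℝ → ℝ := fun t =>
    β * ∑ j, (1 / 2) * (Real.log (1 + t * a j) - Real.log (1 - t * a j)) with hB_def
  set B' : ℝ → ℝ := fun t =>
    β * ∑ j, (1 / 2) * (a j / (1 + t * a j) + a j / (1 - t * a j)) with hB'_def
  have hmem : ∀ t ∈ Set.Icc (0:ℝ) 1, t • w ∈ polyDisk n := fun t ht =>
    smul_mem_polyDisk hw ht.1 ht.2
  have hposn : ∀ t ∈ Set.Icc (0:ℝ) 1, ∀ j, 0 < 1 + t * a j := by
    intro t ht j; nlinarith [ht.1, ha0 j]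
  have hposd : ∀ t ∈ Set.Icc (0:ℝ) 1, ∀ j, 0 < 1 - t * a j := by
    intro t ht j
    have : t * a j ≤ a j := by nlinarith [ht.1, ht.2, ha0 j]
    nlinarith [ha j]
  -- derivative of g
  have hg' : ∀ t ∈ Set.Ico (0:ℝ) 1, HasDerivAt g (g' t) t := by
    intro t ht
    have hmem' : t • w ∈ polyDisk n := hmem t ⟨ht.1, ht.2.le⟩
    have hfd : HasFDerivAt f (fderiv ℂ f (t • w)) (t • w) :=
      (hf.differentiableAt ((polyDisk_isOpen n).mem_nhds hmem')).hasFDerivAt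
    have hcurve : HasDerivAt (fun s : ℝ => s • w) w t := by
      have h0 : HasDerivAt (fun s : ℝ => s • w) ((1:ℝ) • w) t :=
        HasDerivAt.smul_const (hasDerivAt_id t) w
      rwa [one_smul] at h0
    have := (hfd.restrictScalars ℝ).comp_hasDerivAt t hcurve
    simpa [hg_def, hg'_def] using this.sub_const (f 0)
  -- continuity of g on [0,1]
  have hgc : ContinuousOn g (Set.Icc (0:ℝ) 1) := by
    refine ContinuousOn.sub ?_ continuousOn_const
    refine hf.continuousOn.comp ?_ hmem
    exact (continuous_id.smul continuous_const).continuousOn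
  -- derivative of B
  have hB' : ∀ t ∈ Set.Ico (0:ℝ) 1, HasDerivAt B (B' t) t := by
    intro t ht
    have ht' : t ∈ Set.Icc (0:ℝ) 1 := ⟨ht.1, ht.2.le⟩
    refine HasDerivAt.const_mul β ?_
    refine HasDerivAt.fun_sum fun j _ => ?_
    refine HasDerivAt.const_mul (1/2 : ℝ) ?_
    have h1 : HasDerivAt (fun s : ℝ => 1 + s * a j) (a j) t := by
      simpa using (hasDerivAt_mul_const (a j)).const_add 1
    have h2 : HasDerivAt (fun s : ℝ => 1 - s * a j) (-(a j)) t := by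
      simpa using (hasDerivAt_mul_const (a j)).const_sub 1
    have hl1 : HasDerivAt (fun s : ℝ => Real.log (1 + s * a j)) (a j / (1 + t * a j)) t :=
      h1.log (hposn t ht' j).ne'
    have hl2 : HasDerivAt (fun s : ℝ => Real.log (1 - s * a j)) (-(a j) / (1 - t * a j)) t :=
      h2.log (hposd t ht' j).ne'
    have := hl1.fun_sub hl2
    simpa [neg_div, sub_neg_eq_add] using this
  have hBc : ContinuousOn B (Set.Icc (0:ℝ) 1) := by
    refine continuousOn_const.mul (continuousOn_finset_sum _ fun j _ => ?_)
    refine continuousOn_const.mul (ContinuousOn.sub ?_ ?_)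
    · have c1 : ContinuousOn (fun s : ℝ => 1 + s * a j) (Set.Icc (0:ℝ) 1) := by fun_prop
      exact c1.log (fun t ht => (hposn t ht j).ne')
    · have c1 : ContinuousOn (fun s : ℝ => 1 - s * a j) (Set.Icc (0:ℝ) 1) := by fun_prop
      exact c1.log (fun t ht => (hposd t ht j).ne')
  -- the bound
  have hbound : ∀ t ∈ Set.Ico (0:ℝ) 1, ‖g' t‖ ≤ B' t := by
    intro t ht
    have ht' : t ∈ Set.Icc (0:ℝ) 1 := ⟨ht.1, ht.2.le⟩
    have hmem' : t • w ∈ polyDisk n := hmem t ht'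
    have h1 : ‖g' t‖ ≤ QBloch f (t • w) * Real.sqrt (bergmanH (t • w) w) :=
      norm_fderiv_apply_le hn hmem' w
    have h2 : Real.sqrt (bergmanH (t • w) w) ≤ ∑ j, ‖w j‖ / (1 - ‖(t • w) j‖ ^ 2) :=
      sqrt_bergman_le hmem' w
    have h3 : ∀ j : Fin n, ‖(t • w) j‖ = t * a j := by
      intro j; rw [Pi.smul_apply, norm_smul, Real.norm_eq_abs, _root_.abs_of_nonneg ht.1]
    have h4 : ∑ j, ‖w j‖ / (1 - ‖(t • w) j‖ ^ 2)
        = ∑ j, (1 / 2) * (a j / (1 + t * a j) + a j / (1 - t * a j)) := by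
      refine Finset.sum_congr rfl fun j _ => ?_
      rw [h3 j]
      have hn1 := hposn t ht' j
      have hn2 := hposd t ht' j
      have hwa : ‖w j‖ = a j := rfl
      have hn3 : 1 - (t * a j) ^ 2 = (1 + t * a j) * (1 - t * a j) := by ring
      rw [hwa, hn3]
      rw [div_add_div _ _ hn1.ne' hn2.ne', show a j * (1 - t * a j) + (1 + t * a j) * a j = 2 * a j by ring]
      ring
    refine h1.trans ?_
    rw [hB'_def]
    refine le_trans (mul_le_mul (hβ _ hmem') h2 (Real.sqrt_nonneg _)  hβ0) ?_
    rw [h4]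
  -- apply the fencing theorem
  have ha0' : ‖g 0‖ ≤ B 0 := by simp [hg_def, hB_def]
  have key := image_norm_le_of_norm_deriv_right_le_deriv_boundary' hgc
    (fun t ht => (hg' t ht).hasDerivWithinAt) ha0' hBc
    (fun t ht => (hB' t ht).hasDerivWithinAt) hbound
  have h1 := key (Set.right_mem_Icc.mpr zero_le_one)
  have : g 1 = f w - f 0 := by simp [hg_def]
  rw [this] at h1
  refine h1.trans (le_of_eq ?_)
  rw [hB_def]
  simp only
  congr 1
  refine Finset.sum_congr rfl fun j _ => ?_
  rw [one_mul, Real.log_div (by nlinarith [ha0 j] : (1:ℝ) + a j ≠ 0)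
    (by nlinarith [ha j] : (1:ℝ) - a j ≠ 0)]


lemma norm_lt_one_facts {s : ℂ} (hs : ‖s‖ < 1) :
    (1 + s ≠ 0) ∧ (1 - s ≠ 0) ∧ (1 + s) / (1 - s) ∈ slitPlane := by
  have h1 : (1 : ℂ) + s ≠ 0 := by
    intro h
    have : s = -1 := by linear_combination h
    rw [this] at hs; simp at hs
  have h2 : (1 : ℂ) - s ≠ 0 := by
    intro h
    have : s = 1 := by linear_combination -h
    rw [this] at hs; simp at hs
  refine ⟨h1, h2, ?_⟩
  rw [mem_slitPlane_iff]
  left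
  rw [Complex.div_re]
  have hnum : (1 + s).re * (1 - s).re + (1 + s).im * (1 - s).im = 1 - normSq s := by
    simp [Complex.normSq_apply]; ring
  have hden : 0 < normSq (1 - s) := normSq_pos.mpr h2
  have hlt : normSq s < 1 := by
    have := Complex.normSq_eq_norm_sq s
    have h3 : ‖s‖ < 1 := hs
    nlinarith [norm_nonneg s]
  rw [← add_div]
  rw [hnum]
  exact div_pos (by linarith) hden

lemma hasDerivAt_half_log_mobius {a ζ : ℂ} (ha : ‖a‖ ≤ 1) (hζ : ‖ζ‖ < 1) :
    HasDerivAt (fun x : ℂ => (1 / 2 : ℂ) * Complex.log ((1 + a * x) / (1 - a * x)))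
      (a / (1 - (a * ζ) ^ 2)) ζ := by
  have hs : ‖a * ζ‖ < 1 := by
    calc ‖a * ζ‖ = ‖a‖ * ‖ζ‖ := norm_mul a ζ
      _ ≤ 1 * ‖ζ‖ := mul_le_mul_of_nonneg_right ha (norm_nonneg _)
      _ = ‖ζ‖ := one_mul _
      _ < 1 := hζ
  obtain ⟨h1, h2, hq⟩ := norm_lt_one_facts hs
  have hu : HasDerivAt (fun x : ℂ => 1 + a * x) a ζ := by
    simpa using (hasDerivAt_id ζ).const_mul a |>.const_add 1
  have hv : HasDerivAt (fun x : ℂ => 1 - a * x) (-a) ζ := by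
    simpa using ((hasDerivAt_id ζ).const_mul a).const_sub 1
  have hdiv : HasDerivAt (fun x : ℂ => (1 + a * x) / (1 - a * x))
      ((a * (1 - a * ζ) - (1 + a * ζ) * (-a)) / (1 - a * ζ) ^ 2) ζ := hu.div hv h2
  have hlog := (Complex.hasDerivAt_log hq).comp ζ hdiv
  have := hlog.const_mul (1 / 2 : ℂ)
  refine this.congr_deriv ?_
  have h4 : (1 : ℂ) - a ^ 2 * ζ ^ 2 ≠ 0 := by
    have he : (1 : ℂ) - a ^ 2 * ζ ^ 2 = (1 - a * ζ) * (1 + a * ζ) := by ring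
    rw [he]; exact mul_ne_zero h2 h1
  have h5 : (1 : ℂ) - (a * ζ) ^ 2 ≠ 0 := by
    intro h; apply h4; rw [← h]; ring
  field_simp
  ring

def eta {n : ℕ} (w : Fin n → ℂ) (j : Fin n) : ℂ :=
  if w j = 0 then 0 else (starRingEnd ℂ) (w j) / (‖w j‖ : ℂ)

lemma norm_eta_le_one {n : ℕ} (w : Fin n → ℂ) (j : Fin n) : ‖eta w j‖ ≤ 1 := by
  unfold eta
  split_ifs with h
  · simp
  · rw [norm_div]
    have h1 : ‖(starRingEnd ℂ) (w j)‖ = ‖w j‖ := RCLike.norm_conj _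
    have h2 : ‖((‖w j‖ : ℝ) : ℂ)‖ = ‖w j‖ := by
      rw [Complex.norm_real, Real.norm_eq_abs, _root_.abs_of_nonneg (norm_nonneg _)]
    rw [h1, h2, div_self (by simpa using h)]

lemma eta_mul_self {n : ℕ} (w : Fin n → ℂ) (j : Fin n) :
    eta w j * w j = ((‖w j‖ : ℝ) : ℂ) := by
  unfold eta
  split_ifs with h
  · simp [h]
  · have h1 : (starRingEnd ℂ) (w j) * w j = ((‖w j‖ ^ 2 : ℝ) : ℂ) := by
      rw [mul_comm, Complex.mul_conj, Complex.normSq_eq_norm_sq]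
    have h2 : ((‖w j‖ : ℝ) : ℂ) ≠ 0 := by simpa using h
    rw [div_mul_eq_mul_div, h1, Complex.ofReal_pow, sq, mul_div_assoc, div_self h2, mul_one]

def testFn (n : ℕ) (w : Fin n → ℂ) (z : Fin n → ℂ) : ℂ :=
  (((Real.sqrt n : ℝ) : ℂ))⁻¹ *
    ∑ j, (1 / 2 : ℂ) * Complex.log ((1 + eta w j * z j) / (1 - eta w j * z j))

lemma testFn_hasFDerivAt {n : ℕ} (w : Fin n → ℂ) {z : Fin n → ℂ} (hz : z ∈ polyDisk n) :
    HasFDerivAt (testFn n w)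
      ((((Real.sqrt n : ℝ) : ℂ))⁻¹ • ∑ j, (eta w j / (1 - (eta w j * z j) ^ 2)) •
        (ContinuousLinearMap.proj j : (Fin n → ℂ) →L[ℂ] ℂ)) z := by
  refine HasFDerivAt.const_mul ?_ _
  refine HasFDerivAt.fun_sum fun j _ => ?_
  have hd := hasDerivAt_half_log_mobius (norm_eta_le_one w j) (hz j)
  have h2 := hd.comp_hasFDerivAt (f := fun y : Fin n → ℂ => y j) z (hasFDerivAt_apply (𝕜 := ℂ) j z)
  exact h2

lemma testFn_fderiv_apply_le {n : ℕ} (hn : 0 < n) (w : Fin n → ℂ) {z : Fin n → ℂ}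
    (hz : z ∈ polyDisk n) (u : Fin n → ℂ) :
    ‖fderiv ℂ (testFn n w) z u‖ ≤ Real.sqrt (bergmanH z u) := by
  have hD := (testFn_hasFDerivAt w hz).fderiv
  rw [hD]
  have happ : ((((Real.sqrt n : ℝ) : ℂ))⁻¹ • ∑ j, (eta w j / (1 - (eta w j * z j) ^ 2)) •
      (ContinuousLinearMap.proj j : (Fin n → ℂ) →L[ℂ] ℂ)) u
      = (((Real.sqrt n : ℝ) : ℂ))⁻¹ * ∑ j, (eta w j / (1 - (eta w j * z j) ^ 2)) * u j := by
    simp [ContinuousLinearMap.sum_apply, smul_eq_mul]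
  rw [happ]
  have hsq : (0:ℝ) < Real.sqrt n := Real.sqrt_pos.mpr (by exact_mod_cast hn)
  have hterm : ∀ j : Fin n, ‖(eta w j / (1 - (eta w j * z j) ^ 2)) * u j‖
      ≤ ‖u j‖ / (1 - ‖z j‖ ^ 2) := by
    intro j
    have hzj := hz j
    have hs : ‖eta w j * z j‖ ≤ ‖z j‖ := by
      rw [norm_mul]
      calc ‖eta w j‖ * ‖z j‖ ≤ 1 * ‖z j‖ :=
            mul_le_mul_of_nonneg_right (norm_eta_le_one w j) (norm_nonneg _)
        _ = ‖z j‖ := one_mul _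
    have hden : 1 - ‖z j‖ ^ 2 ≤ ‖1 - (eta w j * z j) ^ 2‖ := by
      have h1 : ‖(1 : ℂ)‖ - ‖(eta w j * z j) ^ 2‖ ≤ ‖1 - (eta w j * z j) ^ 2‖ :=
        norm_sub_norm_le _ _
      have h2 : ‖(eta w j * z j) ^ 2‖ ≤ ‖z j‖ ^ 2 := by
        rw [norm_pow]
        exact pow_le_pow_left₀ (norm_nonneg _) hs 2
      simp only [norm_one] at h1
      linarith
    have hpos : (0:ℝ) < 1 - ‖z j‖ ^ 2 := by nlinarith [norm_nonneg (z j)]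
    rw [norm_mul, norm_div]
    calc ‖eta w j‖ / ‖1 - (eta w j * z j) ^ 2‖ * ‖u j‖
        ≤ 1 / (1 - ‖z j‖ ^ 2) * ‖u j‖ := by
          refine mul_le_mul_of_nonneg_right ?_ (norm_nonneg _)
          exact div_le_div₀ (by norm_num) (norm_eta_le_one w j) hpos hden
      _ = ‖u j‖ / (1 - ‖z j‖ ^ 2) := by ring
  calc ‖(((Real.sqrt n : ℝ) : ℂ))⁻¹ * ∑ j, (eta w j / (1 - (eta w j * z j) ^ 2)) * u j‖
      = (Real.sqrt n)⁻¹ * ‖∑ j, (eta w j / (1 - (eta w j * z j) ^ 2)) * u j‖ := by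
        rw [norm_mul, norm_inv, Complex.norm_real, Real.norm_eq_abs,
          _root_.abs_of_nonneg (Real.sqrt_nonneg _)]
    _ ≤ (Real.sqrt n)⁻¹ * ∑ j, ‖u j‖ / (1 - ‖z j‖ ^ 2) := by
        refine mul_le_mul_of_nonneg_left ?_ (by positivity)
        exact (norm_sum_le _ _).trans (Finset.sum_le_sum fun j _ => hterm j)
    _ ≤ (Real.sqrt n)⁻¹ * (Real.sqrt n * Real.sqrt (bergmanH z u)) := by
        refine mul_le_mul_of_nonneg_left ?_ (by positivity)
        exact sum_le_sqrt_mul_sqrt_bergman hz u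
    _ = Real.sqrt (bergmanH z u) := by field_simp

lemma QBloch_testFn_le_one {n : ℕ} (hn : 0 < n) (w : Fin n → ℂ) {z : Fin n → ℂ}
    (hz : z ∈ polyDisk n) : QBloch (testFn n w) z ≤ 1 := by
  refine Real.sSup_le ?_ zero_le_one
  rintro r ⟨u, hu, rfl⟩
  have hup : 0 < ‖u‖ := norm_pos_iff.mpr hu
  have hsq : 0 < Real.sqrt (bergmanH z u) :=
    lt_of_lt_of_le hup (norm_le_sqrt_bergman hz u)
  rw [div_le_one hsq]
  exact testFn_fderiv_apply_le hn w hz u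

lemma testFn_zero {n : ℕ} (w : Fin n → ℂ) : testFn n w 0 = 0 := by
  unfold testFn
  simp

lemma testFn_self {n : ℕ} (hn : 0 < n) {w : Fin n → ℂ} (hw : w ∈ polyDisk n) :
    ‖testFn n w w‖
      = (Real.sqrt n)⁻¹ * ((1 / 2) * ∑ j, Real.log ((1 + ‖w j‖) / (1 - ‖w j‖))) := by
  have hterm : ∀ j : Fin n, (1 / 2 : ℂ) * Complex.log ((1 + eta w j * w j) / (1 - eta w j * w j))
      = (((1 / 2) * Real.log ((1 + ‖w j‖) / (1 - ‖w j‖)) : ℝ) : ℂ) := by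
    intro j
    rw [eta_mul_self]
    have h1 : ((1 : ℂ) + (‖w j‖ : ℝ)) / (1 - (‖w j‖ : ℝ))
        = (((1 + ‖w j‖) / (1 - ‖w j‖) : ℝ) : ℂ) := by push_cast; ring
    have hwj := hw j
    have h0' : (0:ℝ) ≤ ‖w j‖ := norm_nonneg _
    rw [h1, ← Complex.ofReal_log (div_nonneg (by linarith) (by linarith))]
    push_cast
    ring
  unfold testFn
  rw [Finset.sum_congr rfl fun j _ => hterm j]
  rw [← Complex.ofReal_sum]
  have : ((((Real.sqrt n : ℝ)) : ℂ))⁻¹ = (((Real.sqrt n)⁻¹ : ℝ) : ℂ) := by push_cast; ring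
  rw [this, ← Complex.ofReal_mul, Complex.norm_real, Real.norm_eq_abs]
  rw [_root_.abs_of_nonneg]
  · rw [← Finset.mul_sum]
  · refine mul_nonneg (by positivity) (Finset.sum_nonneg fun j _ => ?_)
    have hwj := hw j
    have h0 : (0:ℝ) ≤ ‖w j‖ := norm_nonneg _
    refine mul_nonneg (by norm_num) (Real.log_nonneg ?_)
    rw [le_div_iff₀ (by linarith)]
    linarith

lemma QBloch_const (hn : 0 < n) (c : ℂ) (z : Fin n → ℂ) :
    QBloch (fun _ => c) z = 0 := by
  unfold QBloch
  have hset : {r : ℝ | ∃ u : Fin n → ℂ, u ≠ 0 ∧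
      r = ‖fderiv ℂ (fun _ => c) z u‖ / Real.sqrt (bergmanH z u)} = {0} := by
    ext r
    simp only [Set.mem_setOf_eq, Set.mem_singleton_iff]
    constructor
    · rintro ⟨u, hu, rfl⟩
      simp
    · rintro rfl
      refine ⟨fun _ => 1, ?_, ?_⟩
      · intro h
        have := congrFun h ⟨0, hn⟩
        simp at this
      · simp
  rw [hset, csSup_singleton]

end Aux

/-- W_{ψ,φ} : ℬ(𝔻ⁿ) → H^∞_μ(𝔻ⁿ) is bounded iff ψ ∈ H^∞_μ(𝔻ⁿ) and ϑ_μ(ψ,φ) < ∞. -/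
theorem bounded_iff_polydisk {n : ℕ} (hn : 0 < n)
    (μ : (Fin n → ℂ) → ℝ) (ψ : (Fin n → ℂ) → ℂ) (φ : (Fin n → ℂ) → Fin n → ℂ)
    (hμc : ContinuousOn μ (polyDisk n)) (hμp : ∀ z ∈ polyDisk n, 0 < μ z)
    (hψ : DifferentiableOn ℂ ψ (polyDisk n))
    (hφ : DifferentiableOn ℂ φ (polyDisk n)) (hφs : ∀ z ∈ polyDisk n, φ z ∈ polyDisk n) :
    BddAbove (WSetP μ ψ φ) ↔
      BddAbove ((fun z => μ z * ‖ψ z‖) '' polyDisk n) ∧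
        BddAbove (thetaFn μ ψ φ '' polyDisk n) := by

  constructor
  · rintro ⟨C, hC⟩
    constructor
    · -- ψ ∈ H^∞_μ, via the constant function 1
      refine ⟨C, ?_⟩
      rintro r ⟨z, hz, rfl⟩
      have himg : QBloch (fun _ : Fin n → ℂ => (1:ℂ)) '' polyDisk n = {0} := by
        ext r
        constructor
        · rintro ⟨z', hz', rfl⟩
          exact Aux.QBloch_const hn 1 z'
        · rintro rfl
          exact ⟨0, Aux.zero_mem_polyDisk, Aux.QBloch_const hn 1 0⟩
      have hbloch : IsBlochP (fun _ : Fin n → ℂ => (1:ℂ)) := by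
        refine ⟨differentiableOn_const 1, ?_⟩
        rw [himg]; exact bddAbove_singleton
      have hnorm : blochNormP (fun _ : Fin n → ℂ => (1:ℂ)) ≤ 1 := by
        unfold blochNormP betaP
        rw [himg, csSup_singleton]
        simp
      have hmem : μ z * ‖ψ z‖ ∈ WSetP μ ψ φ := by
        refine ⟨fun _ => 1, hbloch, hnorm, z, hz, ?_⟩
        simp
      exact hC hmem
    · -- θ_μ is bounded, via test functions
      refine ⟨Real.sqrt n * C, ?_⟩
      rintro r ⟨z, hz, rfl⟩
      set w := φ z with hw_def
      have hw : w ∈ polyDisk n := hφs z hz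
      have hbloch : IsBlochP (Aux.testFn n w) := by
        constructor
        · intro z' hz'
          exact ((Aux.testFn_hasFDerivAt w hz').differentiableAt).differentiableWithinAt
        · refine ⟨1, ?_⟩
          rintro q ⟨z', hz', rfl⟩
          exact Aux.QBloch_testFn_le_one hn w hz'
      have hbeta : betaP (Aux.testFn n w) ≤ 1 := by
        refine Real.sSup_le ?_ zero_le_one
        rintro q ⟨z', hz', rfl⟩
        exact Aux.QBloch_testFn_le_one hn w hz'
      have hnorm : blochNormP (Aux.testFn n w) ≤ 1 := by
        unfold blochNormP
        rw [Aux.testFn_zero]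
        simpa using hbeta
      have hmem : μ z * (‖ψ z‖ * ‖Aux.testFn n w (φ z)‖) ∈ WSetP μ ψ φ :=
        ⟨Aux.testFn n w, hbloch, hnorm, z, hz, rfl⟩
      have hrC := hC hmem
      have hval : ‖Aux.testFn n w (φ z)‖
          = (Real.sqrt n)⁻¹ * ((1 / 2) * ∑ j, Real.log ((1 + ‖φ z j‖) / (1 - ‖φ z j‖))) := by
        rw [← hw_def]
        exact Aux.testFn_self hn hw
      have hsq : (0:ℝ) < Real.sqrt n := Real.sqrt_pos.mpr (by exact_mod_cast hn)
      have hθ : thetaFn μ ψ φ z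
          = Real.sqrt n * (μ z * (‖ψ z‖ * ‖Aux.testFn n w (φ z)‖)) := by
        rw [hval]
        unfold thetaFn
        field_simp
      rw [hθ]
      exact mul_le_mul_of_nonneg_left hrC hsq.le
  · rintro ⟨⟨C₁, hC₁⟩, ⟨C₂, hC₂⟩⟩
    refine ⟨C₁ + C₂, ?_⟩
    rintro r ⟨f, hfB, hfN, z, hz, rfl⟩
    set w := φ z with hw_def
    have hw : w ∈ polyDisk n := hφs z hz
    set β := betaP f with hβ_def
    have hβup : ∀ z' ∈ polyDisk n, QBloch f z' ≤ β := fun z' hz' =>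
      le_csSup hfB.2 ⟨z', hz', rfl⟩
    have hβ0 : 0 ≤ β :=
      le_trans (Aux.QBloch_nonneg hn Aux.zero_mem_polyDisk)
        (hβup 0 Aux.zero_mem_polyDisk)
    have hf0β : ‖f 0‖ + β ≤ 1 := hfN
    have hβ1 : β ≤ 1 := by
      have := norm_nonneg (f 0); linarith
    set S := ∑ j, Real.log ((1 + ‖w j‖) / (1 - ‖w j‖)) with hS_def
    have hgrow : ‖f w - f 0‖ ≤ β * ∑ j, (1 / 2) * Real.log ((1 + ‖w j‖) / (1 - ‖w j‖)) :=
      Aux.growth hn hfB.1 hβup hw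
    have hS' : (∑ j, (1 / 2) * Real.log ((1 + ‖w j‖) / (1 - ‖w j‖))) = (1 / 2) * S := by
      rw [hS_def, Finset.mul_sum]
    have hS0 : 0 ≤ S := by
      refine Finset.sum_nonneg fun j _ => ?_
      have hwj := hw j
      have h0 : (0:ℝ) ≤ ‖w j‖ := norm_nonneg _
      refine Real.log_nonneg ?_
      rw [le_div_iff₀ (by linarith)]
      linarith
    have hfw : ‖f w‖ ≤ 1 + (1 / 2) * S := by
      have h1 : ‖f w‖ ≤ ‖f 0‖ + ‖f w - f 0‖ := by
        calc ‖f w‖ = ‖f 0 + (f w - f 0)‖ := by ring_nf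
          _ ≤ ‖f 0‖ + ‖f w - f 0‖ := norm_add_le _ _
      have h2 : β * ((1 / 2) * S) ≤ 1 * ((1 / 2) * S) :=
        mul_le_mul_of_nonneg_right hβ1 (by linarith)
      rw [hS'] at hgrow
      have := norm_nonneg (f 0)
      nlinarith
    have hμψ : 0 ≤ μ z * ‖ψ z‖ := mul_nonneg (hμp z hz).le (norm_nonneg _)
    have hμ0 : 0 ≤ μ z := (hμp z hz).le
    have hr : μ z * (‖ψ z‖ * ‖f (φ z)‖) ≤ μ z * (‖ψ z‖ * (1 + (1 / 2) * S)) := by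
      refine mul_le_mul_of_nonneg_left ?_ hμ0
      exact mul_le_mul_of_nonneg_left (by rw [← hw_def]; exact hfw) (norm_nonneg _)
    have hsplit : μ z * (‖ψ z‖ * (1 + (1 / 2) * S))
        = μ z * ‖ψ z‖ + (1 / 2) * (μ z * (‖ψ z‖ * S)) := by ring
    have hθz : (1 / 2) * (μ z * (‖ψ z‖ * S)) = thetaFn μ ψ φ z := by
      unfold thetaFn
      rw [hS_def, hw_def]
    have h1 : μ z * ‖ψ z‖ ≤ C₁ := hC₁ ⟨z, hz, rfl⟩
    have h2 : thetaFn μ ψ φ z ≤ C₂ := hC₂ ⟨z, hz, rfl⟩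
    calc μ z * (‖ψ z‖ * ‖f (φ z)‖) ≤ μ z * (‖ψ z‖ * (1 + (1 / 2) * S)) := hr
      _ = μ z * ‖ψ z‖ + (1 / 2) * (μ z * (‖ψ z‖ * S)) := hsplit
      _ = μ z * ‖ψ z‖ + thetaFn μ ψ φ z := by rw [hθz]
      _ ≤ C₁ + C₂ := add_le_add h1 h2
end
end

section
/- If W_{ψ,φ} : ℬ(𝔻ⁿ) → H^∞_μ(𝔻ⁿ) is bounded, then max{ ‖ψ‖_μ, ϑ_μ(ψ,φ)/(n(1+log2)) } ≤ ‖W_{ψ,φ}‖ ≤ max{ ‖ψ‖_μ, ϑ_μ(ψ,φ) }, where ϑ_μ(ψ,φ) = sup_{z∈𝔻ⁿ} (1/2)μ(z)|ψ(z)| Σ_{j=1}^n log((1+|φ_j(z)|)/(1-|φ_j(z)|)). -/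
open Complex Filter

noncomputable section

-- basic lemmas
lemma isOpen_polyDisk {n : ℕ} : IsOpen (polyDisk n) := by
  have : polyDisk n = ⋂ j, (fun z : Fin n → ℂ => z j) ⁻¹' (Metric.ball 0 1) := by
    ext z; simp [polyDisk, Set.mem_iInter]
  rw [this]
  exact isOpen_iInter_of_finite fun j =>
    (Metric.isOpen_ball).preimage (continuous_apply j)

lemma zero_mem_polyDisk {n : ℕ} : (0 : Fin n → ℂ) ∈ polyDisk n := by
  intro j; simp [polyDisk]

lemma one_sub_sq_pos {n : ℕ} {z : Fin n → ℂ} (hz : z ∈ polyDisk n) (j : Fin n) :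
    0 < 1 - ‖z j‖ ^ 2 := by
  have := hz j
  nlinarith [norm_nonneg (z j)]

lemma bergmanH_nonneg {n : ℕ} (z u : Fin n → ℂ) : 0 ≤ bergmanH z u :=
  Finset.sum_nonneg fun j _ => div_nonneg (by positivity) (by positivity)

lemma bergmanH_pos {n : ℕ} {z u : Fin n → ℂ} (hz : z ∈ polyDisk n) (hu : u ≠ 0) :
    0 < bergmanH z u := by
  obtain ⟨j, hj⟩ : ∃ j, u j ≠ 0 := by
    by_contra h; push_neg at h; exact hu (funext h)
  have hpos : 0 < ‖u j‖ ^ 2 / (1 - ‖z j‖ ^ 2) ^ 2 := by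
    have h1 := one_sub_sq_pos hz j
    have h2 : 0 < ‖u j‖ := norm_pos_iff.2 hj
    positivity
  exact Finset.sum_pos' (fun i _ => div_nonneg (by positivity) (by positivity))
    ⟨j, Finset.mem_univ j, hpos⟩

lemma QBloch_nonneg {n : ℕ} (f : (Fin n → ℂ) → ℂ) (z : Fin n → ℂ) : 0 ≤ QBloch f z := by
  apply Real.sSup_nonneg
  rintro r ⟨u, -, rfl⟩
  exact div_nonneg (norm_nonneg _) (Real.sqrt_nonneg _)

lemma betaP_nonneg {n : ℕ} (f : (Fin n → ℂ) → ℂ) : 0 ≤ betaP f := by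
  apply Real.sSup_nonneg
  rintro r ⟨z, -, rfl⟩
  exact QBloch_nonneg f z

-- the Q-set at a point is bounded above by the operator norm of the derivative
lemma QSet_bddAbove {n : ℕ} (f : (Fin n → ℂ) → ℂ) {z : Fin n → ℂ} (hz : z ∈ polyDisk n) :
    BddAbove {r : ℝ | ∃ u : Fin n → ℂ, u ≠ 0 ∧ r = ‖fderiv ℂ f z u‖ / Real.sqrt (bergmanH z u)} := by
  refine ⟨‖fderiv ℂ f z‖, ?_⟩
  rintro r ⟨u, hu, rfl⟩
  have hH : 0 < bergmanH z u := bergmanH_pos hz hu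
  rw [div_le_iff₀ (Real.sqrt_pos.2 hH)]
  calc ‖fderiv ℂ f z u‖ ≤ ‖fderiv ℂ f z‖ * ‖u‖ := (fderiv ℂ f z).le_opNorm u
    _ ≤ ‖fderiv ℂ f z‖ * Real.sqrt (bergmanH z u) := by
        apply mul_le_mul_of_nonneg_left _ (norm_nonneg _)
        have h1 : ‖u‖ ≤ Real.sqrt (∑ j, ‖u j‖ ^ 2) := by
          rw [pi_norm_le_iff_of_nonneg (Real.sqrt_nonneg _)]
          intro i
          rw [show ‖u i‖ = Real.sqrt (‖u i‖ ^ 2) by rw [Real.sqrt_sq (norm_nonneg _)]]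
          apply Real.sqrt_le_sqrt
          exact Finset.single_le_sum (f := fun j => ‖u j‖ ^ 2)
            (fun j _ => by positivity) (Finset.mem_univ i)
        refine h1.trans (Real.sqrt_le_sqrt (Finset.sum_le_sum fun j _ => ?_))
        have hb := one_sub_sq_pos hz j
        have hb2 : (0:ℝ) < (1 - ‖z j‖ ^ 2) ^ 2 := by positivity
        rw [le_div_iff₀ hb2]
        nlinarith [sq_nonneg (‖u j‖), sq_nonneg (‖z j‖), sq_nonneg (‖u j‖ * ‖z j‖^2)]

lemma norm_fderiv_apply_le {n : ℕ} {f : (Fin n → ℂ) → ℂ}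
    (hb : BddAbove (QBloch f '' polyDisk n)) {z : Fin n → ℂ} (hz : z ∈ polyDisk n)
    (u : Fin n → ℂ) :
    ‖fderiv ℂ f z u‖ ≤ betaP f * Real.sqrt (bergmanH z u) := by
  rcases eq_or_ne u 0 with rfl | hu
  · simpa using mul_nonneg (betaP_nonneg f) (Real.sqrt_nonneg (bergmanH z 0))
  · have hQ : ‖fderiv ℂ f z u‖ / Real.sqrt (bergmanH z u) ≤ QBloch f z :=
      le_csSup (QSet_bddAbove f hz) ⟨u, hu, rfl⟩
    have hβ : QBloch f z ≤ betaP f := le_csSup hb ⟨z, hz, rfl⟩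
    have hH := Real.sqrt_pos.2 (bergmanH_pos hz hu)
    calc ‖fderiv ℂ f z u‖
        = ‖fderiv ℂ f z u‖ / Real.sqrt (bergmanH z u) * Real.sqrt (bergmanH z u) := by
          field_simp
      _ ≤ betaP f * Real.sqrt (bergmanH z u) :=
          mul_le_mul_of_nonneg_right (hQ.trans hβ) hH.le

lemma hasDerivAt_halfLog {c t : ℝ} (hc0 : 0 ≤ c) (hc1 : c < 1) (ht0 : 0 ≤ t) (ht1 : t ≤ 1) :
    HasDerivAt (fun s : ℝ => (1/2) * (Real.log (1 + s*c) - Real.log (1 - s*c)))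
      (c / (1 - (t*c)^2)) t := by
  have htc : t * c < 1 := by nlinarith
  have htc0 : 0 ≤ t * c := mul_nonneg ht0 hc0
  have h1 : (1 + t*c) ≠ 0 := by nlinarith
  have h2 : (1 - t*c) ≠ 0 := by nlinarith
  have h3 : (1 - (t*c)^2) ≠ 0 := by nlinarith
  have ha : HasDerivAt (fun s : ℝ => 1 + s*c) c t := by
    simpa using ((hasDerivAt_id t).mul_const c).const_add 1
  have hb' : HasDerivAt (fun s : ℝ => 1 - s*c) (-c) t := by
    simpa using ((hasDerivAt_id t).mul_const c).const_sub 1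
  have := ((ha.log h1).sub (hb'.log h2)).const_mul (1/2 : ℝ)
  refine this.congr_deriv ?_
  rw [show (1:ℝ) - (t*c)^2 = (1+t*c)*(1-t*c) by ring]
  rw [div_sub_div _ _ h1 h2]
  field_simp
  ring

lemma growth_s13 {n : ℕ} {f : (Fin n → ℂ) → ℂ} (hf : DifferentiableOn ℂ f (polyDisk n))
    (hb : BddAbove (QBloch f '' polyDisk n)) {w : Fin n → ℂ} (hw : w ∈ polyDisk n) :
    ‖f w‖ ≤ ‖f 0‖ + betaP f *
      ∑ j, (1/2) * (Real.log (1 + ‖w j‖) - Real.log (1 - ‖w j‖)) := by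
  set β := betaP f with hβdef
  have hβ0 : 0 ≤ β := betaP_nonneg f
  have smem : ∀ t ∈ Set.Icc (0:ℝ) 1, t • w ∈ polyDisk n := by
    intro t ht j
    have : ‖(t • w) j‖ = |t| * ‖w j‖ := by
      simp [Pi.smul_apply, norm_smul, Real.norm_eq_abs]
    rw [this]
    have h1 : |t| ≤ 1 := abs_le.2 ⟨by linarith [ht.1], ht.2⟩
    calc |t| * ‖w j‖ ≤ 1 * ‖w j‖ :=
          mul_le_mul_of_nonneg_right h1 (norm_nonneg _)
      _ < 1 := by simpa using hw j
  have hd : ∀ t ∈ Set.Icc (0:ℝ) 1,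
      HasDerivAt (fun s : ℝ => f (s • w)) (fderiv ℂ f (t • w) w) t := by
    intro t ht
    have hmem := smem t ht
    have hdf := (hf.differentiableAt (isOpen_polyDisk.mem_nhds hmem)).hasFDerivAt
    have hcw : HasDerivAt (fun s : ℝ => s • w) w t := by
      simpa using (hasDerivAt_id t).smul_const w
    have := (hdf.restrictScalars ℝ).comp_hasDerivAt t hcw
    exact this
  have hBd : ∀ t ∈ Set.Icc (0:ℝ) 1,
      HasDerivAt (fun s : ℝ => β * ∑ j, (1/2) * (Real.log (1 + s*‖w j‖) - Real.log (1 - s*‖w j‖)))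
        (β * ∑ j, ‖w j‖ / (1 - (t*‖w j‖)^2)) t := by
    intro t ht
    exact (HasDerivAt.fun_sum fun j _ =>
      hasDerivAt_halfLog (norm_nonneg (w j)) (hw j) ht.1 ht.2).const_mul β
  have hbound : ∀ t ∈ Set.Ico (0:ℝ) 1,
      ‖fderiv ℂ f (t • w) w‖ ≤ β * ∑ j, ‖w j‖ / (1 - (t*‖w j‖)^2) := by
    intro t ht
    have hmem := smem t ⟨ht.1, ht.2.le⟩
    refine (norm_fderiv_apply_le hb hmem w).trans ?_
    apply mul_le_mul_of_nonneg_left _ hβ0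
    have hHeq : bergmanH (t • w) w = ∑ j, (‖w j‖ / (1 - (t*‖w j‖)^2))^2 := by
      refine Finset.sum_congr rfl fun j _ => ?_
      rw [div_pow]
      congr 3
      simp [Pi.smul_apply, norm_smul, Real.norm_eq_abs, mul_pow, sq_abs]
    have hterm : ∀ j : Fin n, 0 ≤ ‖w j‖ / (1 - (t*‖w j‖)^2) := by
      intro j
      have h1 : t * ‖w j‖ < 1 := by
        have := hw j; have := norm_nonneg (w j); nlinarith [ht.1, ht.2]
      have h0 : 0 ≤ t * ‖w j‖ := mul_nonneg ht.1 (norm_nonneg _)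
      have : 0 < 1 - (t*‖w j‖)^2 := by nlinarith
      positivity
    rw [hHeq]
    rw [show (∑ j, ‖w j‖ / (1 - (t*‖w j‖)^2))
        = Real.sqrt ((∑ j, ‖w j‖ / (1 - (t*‖w j‖)^2))^2) from
      (Real.sqrt_sq (Finset.sum_nonneg fun j _ => hterm j)).symm]
    exact Real.sqrt_le_sqrt (Finset.sum_sq_le_sq_sum_of_nonneg fun j _ => hterm j)
  have key := image_norm_le_of_norm_deriv_right_le_deriv_boundary'
    (f := fun t : ℝ => f (t • w) - f 0) (a := 0) (b := 1)
    (f' := fun t : ℝ => fderiv ℂ f (t • w) w)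
    (B := fun t : ℝ => β * ∑ j, (1/2) * (Real.log (1 + t*‖w j‖) - Real.log (1 - t*‖w j‖)))
    (B' := fun t : ℝ => β * ∑ j, ‖w j‖ / (1 - (t*‖w j‖)^2))
    (fun t ht => ((hd t ht).continuousAt.continuousWithinAt).sub continuousWithinAt_const)
    (fun t ht => ((hd t ⟨ht.1, ht.2.le⟩).sub_const (f 0)).hasDerivWithinAt)
    (by simp)
    (fun t ht => (hBd t ht).continuousAt.continuousWithinAt)
    (fun t ht => (hBd t ⟨ht.1, ht.2.le⟩).hasDerivWithinAt)
    hbound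
  have h1 := key (Set.right_mem_Icc.2 zero_le_one)
  simp only [one_smul, one_mul] at h1
  calc ‖f w‖ ≤ ‖f 0‖ + ‖f w - f 0‖ := by
        have := norm_sub_norm_le (f w) (f 0); linarith [norm_sub_rev (f w) (f 0) ▸ this]
    _ ≤ ‖f 0‖ + β * ∑ j, (1/2) * (Real.log (1 + ‖w j‖) - Real.log (1 - ‖w j‖)) := by
        linarith [h1]

lemma one_add_ne {w : ℂ} (hw : ‖w‖ < 1) : (1:ℂ) + w ≠ 0 := by
  intro h
  have : w = -1 := by linear_combination h
  rw [this] at hw; simp at hw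

lemma one_sub_ne {w : ℂ} (hw : ‖w‖ < 1) : (1:ℂ) - w ≠ 0 := by
  intro h
  have : w = 1 := by linear_combination -h
  rw [this] at hw; simp at hw

lemma ratio_re_pos {w : ℂ} (hw : ‖w‖ < 1) : 0 < ((1 + w)/(1 - w)).re := by
  have h2 : (1:ℂ) - w ≠ 0 := one_sub_ne hw
  have hns : 0 < Complex.normSq (1 - w) := Complex.normSq_pos.2 h2
  have hsq : w.re * w.re + w.im * w.im < 1 := by
    have h1 : ‖w‖^2 < 1 := by nlinarith [norm_nonneg w]
    rwa [Complex.sq_norm, Complex.normSq_apply] at h1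
  rw [Complex.div_re, ← add_div]
  apply div_pos _ hns
  simp only [Complex.add_re, Complex.sub_re, Complex.one_re, Complex.add_im,
    Complex.sub_im, Complex.one_im]
  nlinarith

lemma hasDerivAt_termLog {lam ζ : ℂ} (hlam : ‖lam‖ = 1) (hζ : ‖ζ‖ < 1) :
    HasDerivAt (fun x : ℂ => Complex.log ((1 + lam * x)/(1 - lam * x)))
      (2 * lam / (1 - (lam * ζ)^2)) ζ := by
  have hw : ‖lam * ζ‖ < 1 := by rw [norm_mul, hlam, one_mul]; exact hζ
  have h1 : (1:ℂ) + lam * ζ ≠ 0 := one_add_ne hw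
  have h2 : (1:ℂ) - lam * ζ ≠ 0 := one_sub_ne hw
  have h3 : (1:ℂ) - (lam * ζ)^2 ≠ 0 := by
    intro h
    exact (mul_ne_zero h2 h1) (by linear_combination h)
  have hnum : HasDerivAt (fun x : ℂ => 1 + lam * x) lam ζ := by
    simpa using ((hasDerivAt_id ζ).const_mul lam).const_add 1
  have hden : HasDerivAt (fun x : ℂ => 1 - lam * x) (-lam) ζ := by
    simpa using ((hasDerivAt_id ζ).const_mul lam).const_sub 1
  have hq := hnum.div hden h2
  have hs : (1 + lam * ζ)/(1 - lam * ζ) ∈ Complex.slitPlane :=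
    Or.inl (ratio_re_pos hw)
  have := hq.clog hs
  refine this.congr_deriv ?_
  rw [Pi.div_apply, show (1:ℂ) - (lam*ζ)^2 = (1+lam*ζ)*(1-lam*ζ) by ring]
  field_simp
  ring

lemma testFn_s13 {n : ℕ} (hn : 0 < n) {a : Fin n → ℂ} (ha : a ∈ polyDisk n) :
    ∃ F : (Fin n → ℂ) → ℂ, IsBlochP F ∧ blochNormP F ≤ 1 ∧
      ‖F a‖ = ((n : ℝ) * (1 + Real.log 2))⁻¹ *
        ∑ j, (1/2) * (Real.log (1 + ‖a j‖) - Real.log (1 - ‖a j‖)) := by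
  classical
  set c : ℝ := ((n : ℝ) * (1 + Real.log 2))⁻¹ with hcdef
  have hlog2 : 0 < Real.log 2 := Real.log_pos one_lt_two
  have hc : 0 < c := by
    apply inv_pos.2
    have : (0:ℝ) < n := by exact_mod_cast hn
    positivity
  set lam : Fin n → ℂ := fun j => if a j = 0 then 1 else (starRingEnd ℂ) (a j) / ‖a j‖
    with hlamdef
  have hlam : ∀ j, ‖lam j‖ = 1 := by
    intro j
    rw [hlamdef]
    by_cases h : a j = 0
    · simp [h]
    · have h0 : ‖a j‖ ≠ 0 := norm_ne_zero_iff.2 h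
      simp [h, norm_div, RCLike.norm_conj, Complex.norm_real, Real.norm_eq_abs,
        _root_.abs_of_nonneg (norm_nonneg (a j)), div_self h0]
  have hlama : ∀ j, lam j * a j = (‖a j‖ : ℂ) := by
    intro j
    rw [hlamdef]
    by_cases h : a j = 0
    · simp [h]
    · have h0 : (‖a j‖ : ℂ) ≠ 0 := by
        exact_mod_cast Complex.ofReal_ne_zero.2 (norm_ne_zero_iff.2 h)
      have hm : (starRingEnd ℂ) (a j) * a j = ((‖a j‖ : ℂ))^2 := by
        rw [mul_comm, Complex.mul_conj]
        rw [Complex.normSq_eq_norm_sq]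
        push_cast
        ring
      simp only [if_neg h]
      rw [div_mul_eq_mul_div, hm, sq, mul_div_assoc, div_self h0, mul_one]
  set F : (Fin n → ℂ) → ℂ :=
    fun z => ((c : ℂ)/2) * ∑ j, Complex.log ((1 + lam j * z j)/(1 - lam j * z j))
    with hFdef
  -- derivative at every point of the polydisk
  have hFd : ∀ z ∈ polyDisk n, HasFDerivAt F
      (((c : ℂ)/2) • ∑ j, (2 * lam j / (1 - (lam j * z j)^2)) •
        (ContinuousLinearMap.proj j : (Fin n → ℂ) →L[ℂ] ℂ)) z := by
    intro z hz
    have hterm : ∀ j : Fin n, HasFDerivAt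
        (fun z : Fin n → ℂ => Complex.log ((1 + lam j * z j)/(1 - lam j * z j)))
        ((2 * lam j / (1 - (lam j * z j)^2)) • (ContinuousLinearMap.proj j :
          (Fin n → ℂ) →L[ℂ] ℂ)) z := by
      intro j
      exact (hasDerivAt_termLog (hlam j) (hz j)).comp_hasFDerivAt z
        ((ContinuousLinearMap.proj j : (Fin n → ℂ) →L[ℂ] ℂ)).hasFDerivAt
    exact (HasFDerivAt.fun_sum fun j (_ : j ∈ Finset.univ) => hterm j).const_mul ((c : ℂ)/2)
  have hDu : ∀ z ∈ polyDisk n, ∀ u : Fin n → ℂ,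
      ‖(((c : ℂ)/2) • ∑ j, (2 * lam j / (1 - (lam j * z j)^2)) •
        (ContinuousLinearMap.proj j : (Fin n → ℂ) →L[ℂ] ℂ)) u‖
        ≤ c * ∑ j, ‖u j‖ / (1 - ‖z j‖^2) := by
    intro z hz u
    have happ : (((c : ℂ)/2) • ∑ j, (2 * lam j / (1 - (lam j * z j)^2)) •
        (ContinuousLinearMap.proj j : (Fin n → ℂ) →L[ℂ] ℂ)) u
        = ((c:ℂ)/2) * ∑ j, (2 * lam j / (1 - (lam j * z j)^2)) * u j := by
      simp [ContinuousLinearMap.sum_apply, Finset.mul_sum]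
    rw [happ, norm_mul]
    have hnc : ‖((c:ℝ) : ℂ)/2‖ = c/2 := by
      rw [norm_div]
      simp [Complex.norm_real, Real.norm_eq_abs, _root_.abs_of_nonneg hc.le]
    rw [hnc]
    have hterm : ∀ j : Fin n, ‖(2 * lam j / (1 - (lam j * z j)^2)) * u j‖
        ≤ 2 * (‖u j‖ / (1 - ‖z j‖^2)) := by
      intro j
      have hwz : ‖lam j * z j‖ = ‖z j‖ := by rw [norm_mul, hlam j, one_mul]
      have hzp := one_sub_sq_pos hz j
      have hden : 1 - ‖z j‖^2 ≤ ‖(1:ℂ) - (lam j * z j)^2‖ := by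
        calc 1 - ‖z j‖^2 = ‖(1:ℂ)‖ - ‖(lam j * z j)^2‖ := by
              rw [norm_one, norm_pow, hwz]
          _ ≤ ‖(1:ℂ) - (lam j * z j)^2‖ := norm_sub_norm_le _ _
      rw [norm_mul, norm_div]
      calc ‖2 * lam j‖ / ‖(1:ℂ) - (lam j * z j)^2‖ * ‖u j‖
          = (2 * ‖u j‖) / ‖(1:ℂ) - (lam j * z j)^2‖ := by
            rw [norm_mul, Complex.norm_ofNat, hlam j]; ring
        _ ≤ (2 * ‖u j‖) / (1 - ‖z j‖^2) :=
            div_le_div_of_nonneg_left (by positivity) hzp hden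
        _ = 2 * (‖u j‖ / (1 - ‖z j‖^2)) := by ring
    calc c/2 * ‖∑ j, (2 * lam j / (1 - (lam j * z j)^2)) * u j‖
        ≤ c/2 * ∑ j, ‖(2 * lam j / (1 - (lam j * z j)^2)) * u j‖ :=
          mul_le_mul_of_nonneg_left (norm_sum_le _ _) (by positivity)
      _ ≤ c/2 * ∑ j, 2 * (‖u j‖ / (1 - ‖z j‖^2)) :=
          mul_le_mul_of_nonneg_left (Finset.sum_le_sum fun j _ => hterm j) (by positivity)
      _ = c * ∑ j, ‖u j‖ / (1 - ‖z j‖^2) := by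
          rw [← Finset.mul_sum]; ring
  have hcn : c * (n:ℝ) = (1 + Real.log 2)⁻¹ := by
    have hn' : ((n:ℝ)) ≠ 0 := by positivity
    rw [hcdef, mul_inv]
    field_simp
  have hQb : ∀ z ∈ polyDisk n, QBloch F z ≤ (1 + Real.log 2)⁻¹ := by
    intro z hz
    have hone : (fun _ : Fin n => (1:ℂ)) ≠ 0 := by
      intro h
      have := congrFun h ⟨0, hn⟩
      simp at this
    have hmem : ‖fderiv ℂ F z (fun _ => 1)‖ / Real.sqrt (bergmanH z (fun _ => 1)) ∈
        {r : ℝ | ∃ u : Fin n → ℂ, u ≠ 0 ∧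
          r = ‖fderiv ℂ F z u‖ / Real.sqrt (bergmanH z u)} :=
      ⟨fun _ => 1, hone, rfl⟩
    apply csSup_le ⟨_, hmem⟩
    rintro r ⟨u, hu, rfl⟩
    rw [(hFd z hz).fderiv]
    have hH : 0 < bergmanH z u := bergmanH_pos hz hu
    rw [div_le_iff₀ (Real.sqrt_pos.2 hH)]
    set v : Fin n → ℝ := fun j => ‖u j‖ / (1 - ‖z j‖^2) with hvdef
    have hv0 : ∀ j, 0 ≤ v j := fun j =>
      div_nonneg (norm_nonneg _) (one_sub_sq_pos hz j).le
    have hHv : bergmanH z u = ∑ j, v j^2 :=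
      Finset.sum_congr rfl fun j _ => by rw [hvdef]; rw [div_pow]
    have hle : ∀ j : Fin n, v j ≤ Real.sqrt (bergmanH z u) := by
      intro j
      rw [hHv, show v j = Real.sqrt (v j ^ 2) from (Real.sqrt_sq (hv0 j)).symm]
      apply Real.sqrt_le_sqrt
      exact Finset.single_le_sum (f := fun j => v j ^ 2)
        (fun i _ => sq_nonneg _) (Finset.mem_univ j)
    calc ‖(((c : ℂ)/2) • ∑ j, (2 * lam j / (1 - (lam j * z j)^2)) •
          (ContinuousLinearMap.proj j : (Fin n → ℂ) →L[ℂ] ℂ)) u‖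
        ≤ c * ∑ j, v j := hDu z hz u
      _ ≤ c * ∑ _j : Fin n, Real.sqrt (bergmanH z u) :=
          mul_le_mul_of_nonneg_left (Finset.sum_le_sum fun j _ => hle j) hc.le
      _ = (1 + Real.log 2)⁻¹ * Real.sqrt (bergmanH z u) := by
          rw [Finset.sum_const, Finset.card_univ, Fintype.card_fin, nsmul_eq_mul, ← hcn]
          ring
  have hβF : betaP F ≤ (1 + Real.log 2)⁻¹ :=
    csSup_le ⟨QBloch F 0, ⟨0, zero_mem_polyDisk, rfl⟩⟩
      (by rintro r ⟨z, hz, rfl⟩; exact hQb z hz)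
  have hF0 : F 0 = 0 := by
    rw [hFdef]
    simp
  have hBloch : IsBlochP F :=
    ⟨fun z hz => ((hFd z hz).differentiableAt).differentiableWithinAt,
      ⟨(1 + Real.log 2)⁻¹, by rintro r ⟨z, hz, rfl⟩; exact hQb z hz⟩⟩
  have hbn : blochNormP F ≤ 1 := by
    rw [blochNormP, hF0, norm_zero, zero_add]
    exact hβF.trans (inv_le_one_of_one_le₀ (by linarith))
  have hFa : F a = (((c/2) * ∑ j, (Real.log (1 + ‖a j‖) - Real.log (1 - ‖a j‖)) : ℝ) : ℂ) := by
    rw [hFdef]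
    have hterm : ∀ j : Fin n, Complex.log ((1 + lam j * a j)/(1 - lam j * a j))
        = ((Real.log (1 + ‖a j‖) - Real.log (1 - ‖a j‖) : ℝ) : ℂ) := by
      intro j
      have hx0 : (0:ℝ) ≤ ‖a j‖ := norm_nonneg _
      have hx1 : ‖a j‖ < 1 := ha j
      rw [hlama j]
      rw [show ((1:ℂ) + (‖a j‖:ℝ))/(1 - (‖a j‖:ℝ))
          = (((1 + ‖a j‖)/(1 - ‖a j‖) : ℝ) : ℂ) by push_cast; ring]
      rw [← Complex.ofReal_log (div_nonneg (by linarith) (by linarith))]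
      rw [Real.log_div (by linarith) (by linarith)]
    simp only [hterm]
    push_cast
    ring
  have hsumnn : (0:ℝ) ≤ ∑ j, (Real.log (1 + ‖a j‖) - Real.log (1 - ‖a j‖)) := by
    apply Finset.sum_nonneg
    intro j _
    have hx1 : ‖a j‖ < 1 := ha j
    have := Real.log_le_log (by linarith [norm_nonneg (a j)])
      (show (1:ℝ) - ‖a j‖ ≤ 1 + ‖a j‖ by linarith [norm_nonneg (a j)])
    linarith
  refine ⟨F, hBloch, hbn, ?_⟩
  rw [hFa]
  rw [Complex.norm_real, Real.norm_eq_abs,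
    _root_.abs_of_nonneg (by positivity)]
  rw [Finset.mul_sum, Finset.mul_sum]
  apply Finset.sum_congr rfl
  intro j _
  ring


/-- Norm estimates on the polydisk: if W_{ψ,φ} : ℬ(𝔻ⁿ) → H^∞_μ(𝔻ⁿ) is bounded,
then max{‖ψ‖_μ, ϑ_μ(ψ,φ)/(n(1+log 2))} ≤ ‖W_{ψ,φ}‖ ≤ max{‖ψ‖_μ, ϑ_μ(ψ,φ)}. -/
theorem opNorm_estimates_polydisk {n : ℕ} (hn : 0 < n)
    (μ : (Fin n → ℂ) → ℝ) (ψ : (Fin n → ℂ) → ℂ) (φ : (Fin n → ℂ) → Fin n → ℂ)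
    (hμc : ContinuousOn μ (polyDisk n)) (hμp : ∀ z ∈ polyDisk n, 0 < μ z)
    (hψ : DifferentiableOn ℂ ψ (polyDisk n))
    (hφ : DifferentiableOn ℂ φ (polyDisk n)) (hφs : ∀ z ∈ polyDisk n, φ z ∈ polyDisk n)
    (hbdd : BddAbove (WSetP μ ψ φ)) :
    max (sSup ((fun z => μ z * ‖ψ z‖) '' polyDisk n))
        (sSup (thetaFn μ ψ φ '' polyDisk n) / (n * (1 + Real.log 2))) ≤
      sSup (WSetP μ ψ φ) ∧
    sSup (WSetP μ ψ φ) ≤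
      max (sSup ((fun z => μ z * ‖ψ z‖) '' polyDisk n))
        (sSup (thetaFn μ ψ φ '' polyDisk n)) := by
  classical
  set S := sSup (WSetP μ ψ φ) with hSdef
  have hK : (0:ℝ) < (n:ℝ) * (1 + Real.log 2) := by
    have h1 : (0:ℝ) < n := by exact_mod_cast hn
    have h2 : 0 < Real.log 2 := Real.log_pos one_lt_two
    positivity
  have hone : (fun _ : Fin n => (1:ℂ)) ≠ 0 := by
    intro h
    have := congrFun h ⟨0, hn⟩
    simp at this
  -- the constant function 1
  have hQ1 : ∀ z : Fin n → ℂ, QBloch (fun _ => (1:ℂ)) z = 0 := by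
    intro z
    have hset : {r : ℝ | ∃ u : Fin n → ℂ, u ≠ 0 ∧
        r = ‖fderiv ℂ (fun _ => (1:ℂ)) z u‖ / Real.sqrt (bergmanH z u)} = {0} := by
      ext r
      simp only [Set.mem_setOf_eq, Set.mem_singleton_iff]
      constructor
      · rintro ⟨u, hu, rfl⟩; simp
      · rintro rfl
        exact ⟨fun _ => 1, hone, by simp⟩
    rw [QBloch, hset, csSup_singleton]
  have himg : QBloch (fun _ : Fin n → ℂ => (1:ℂ)) '' polyDisk n = {0} := by
    rw [show QBloch (fun _ : Fin n → ℂ => (1:ℂ)) = fun _ => 0 from funext hQ1]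
    exact Set.Nonempty.image_const ⟨0, zero_mem_polyDisk⟩ 0
  have hconst : IsBlochP (fun _ : Fin n → ℂ => (1:ℂ)) :=
    ⟨differentiableOn_const 1, by rw [himg]; exact bddAbove_singleton⟩
  have hbn1 : blochNormP (fun _ : Fin n → ℂ => (1:ℂ)) ≤ 1 := by
    rw [blochNormP, betaP, himg, csSup_singleton]
    simp
  have hμψ_mem : ∀ z ∈ polyDisk n, μ z * ‖ψ z‖ ∈ WSetP μ ψ φ := by
    intro z hz
    exact ⟨fun _ => 1, hconst, hbn1, z, hz, by simp⟩
  have hA_bdd : BddAbove ((fun z => μ z * ‖ψ z‖) '' polyDisk n) := by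
    obtain ⟨b, hb⟩ := hbdd
    refine ⟨b, ?_⟩
    rintro r ⟨z, hz, rfl⟩
    exact hb (hμψ_mem z hz)
  have hA_le : sSup ((fun z => μ z * ‖ψ z‖) '' polyDisk n) ≤ S := by
    have hne : ((fun z => μ z * ‖ψ z‖) '' polyDisk n).Nonempty :=
      ⟨_, 0, zero_mem_polyDisk, rfl⟩
    apply csSup_le hne
    rintro r ⟨z, hz, rfl⟩
    exact le_csSup hbdd (hμψ_mem z hz)
  -- rewriting thetaFn with log of a quotient expanded
  have hθeq : ∀ z ∈ polyDisk n, thetaFn μ ψ φ z = μ z * (‖ψ z‖ *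
      ∑ j, (1/2) * (Real.log (1 + ‖φ z j‖) - Real.log (1 - ‖φ z j‖))) := by
    intro z hz
    rw [thetaFn]
    have hlog : ∀ j : Fin n, Real.log ((1 + ‖φ z j‖)/(1 - ‖φ z j‖)) =
        Real.log (1 + ‖φ z j‖) - Real.log (1 - ‖φ z j‖) := by
      intro j
      have h1 : (0:ℝ) < 1 + ‖φ z j‖ := by positivity
      have h2 : (0:ℝ) < 1 - ‖φ z j‖ := by
        have := hφs z hz j; linarith
      exact Real.log_div (ne_of_gt h1) (ne_of_gt h2)
    simp only [hlog]
    rw [show (∑ j, (1/2) * (Real.log (1 + ‖φ z j‖) - Real.log (1 - ‖φ z j‖)))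
        = (1/2) * ∑ j, (Real.log (1 + ‖φ z j‖) - Real.log (1 - ‖φ z j‖)) from
      (Finset.mul_sum _ _ _).symm]
    ring
  -- the theta bound via test functions
  have hθ : ∀ z ∈ polyDisk n, thetaFn μ ψ φ z ≤ ((n:ℝ) * (1 + Real.log 2)) * S := by
    intro z hz
    obtain ⟨F, hF, hFn, hFa⟩ := testFn_s13 hn (hφs z hz)
    have hr : μ z * (‖ψ z‖ * ‖F (φ z)‖) ≤ S :=
      le_csSup hbdd ⟨F, hF, hFn, z, hz, rfl⟩
    have hμψ0 : 0 ≤ μ z * ‖ψ z‖ :=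
      mul_nonneg (hμp z hz).le (norm_nonneg _)
    calc thetaFn μ ψ φ z
        = ((n:ℝ) * (1 + Real.log 2)) * (μ z * (‖ψ z‖ * ‖F (φ z)‖)) := by
          rw [hθeq z hz, hFa]
          field_simp
      _ ≤ ((n:ℝ) * (1 + Real.log 2)) * S :=
          mul_le_mul_of_nonneg_left hr hK.le
  have hθ_bdd : BddAbove (thetaFn μ ψ φ '' polyDisk n) := by
    refine ⟨((n:ℝ) * (1 + Real.log 2)) * S, ?_⟩
    rintro r ⟨z, hz, rfl⟩
    exact hθ z hz
  have hB_le : sSup (thetaFn μ ψ φ '' polyDisk n) ≤ ((n:ℝ) * (1 + Real.log 2)) * S := by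
    have hne : (thetaFn μ ψ φ '' polyDisk n).Nonempty :=
      ⟨_, 0, zero_mem_polyDisk, rfl⟩
    apply csSup_le hne
    rintro r ⟨z, hz, rfl⟩
    exact hθ z hz
  constructor
  · -- lower bound
    apply max_le hA_le
    rw [div_le_iff₀ hK]
    linarith [hB_le]
  · -- upper bound
    set A := sSup ((fun z => μ z * ‖ψ z‖) '' polyDisk n) with hAdef
    set B := sSup (thetaFn μ ψ φ '' polyDisk n) with hBdef
    have hM0 : 0 ≤ max A B := by
      have h0 : μ 0 * ‖ψ 0‖ ≤ A :=
        le_csSup hA_bdd ⟨0, zero_mem_polyDisk, rfl⟩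
      have := mul_nonneg (hμp 0 zero_mem_polyDisk).le (norm_nonneg (ψ 0))
      exact le_trans (le_trans this h0) (le_max_left A B)
    apply csSup_le ⟨_, hμψ_mem 0 zero_mem_polyDisk⟩
    rintro r ⟨f, hf, hfn, z, hz, rfl⟩
    have hμψ0 : 0 ≤ μ z * ‖ψ z‖ :=
      mul_nonneg (hμp z hz).le (norm_nonneg _)
    have hg := growth_s13 hf.1 hf.2 (hφs z hz)
    have hAM : μ z * ‖ψ z‖ ≤ max A B :=
      le_trans (le_csSup hA_bdd ⟨z, hz, rfl⟩) (le_max_left A B)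
    have hBM : μ z * (‖ψ z‖ *
        ∑ j, (1/2) * (Real.log (1 + ‖φ z j‖) - Real.log (1 - ‖φ z j‖))) ≤ max A B := by
      rw [← hθeq z hz]
      exact le_trans (le_csSup hθ_bdd ⟨z, hz, rfl⟩) (le_max_right A B)
    have hfn' : ‖f 0‖ + betaP f ≤ 1 := hfn
    calc μ z * (‖ψ z‖ * ‖f (φ z)‖)
        = (μ z * ‖ψ z‖) * ‖f (φ z)‖ := by ring
      _ ≤ (μ z * ‖ψ z‖) * (‖f 0‖ + betaP f *
            ∑ j, (1/2) * (Real.log (1 + ‖φ z j‖) - Real.log (1 - ‖φ z j‖))) :=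
          mul_le_mul_of_nonneg_left hg hμψ0
      _ = ‖f 0‖ * (μ z * ‖ψ z‖) + betaP f * (μ z * (‖ψ z‖ *
            ∑ j, (1/2) * (Real.log (1 + ‖φ z j‖) - Real.log (1 - ‖φ z j‖)))) := by ring
      _ ≤ ‖f 0‖ * max A B + betaP f * max A B :=
          add_le_add (mul_le_mul_of_nonneg_left hAM (norm_nonneg _))
            (mul_le_mul_of_nonneg_left hBM (betaP_nonneg f))
      _ = (‖f 0‖ + betaP f) * max A B := by ring
      _ ≤ 1 * max A B := mul_le_mul_of_nonneg_right hfn' hM0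
      _ = max A B := one_mul _
end
end
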